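/- arXiv:2501.07484 — 4 statements merged into one kernel-verified Lean document; each statement's English description precedes it below -/
import Mathlib

section
/- For every integer d ≥ 2 and every real α > 1 there exists R⋆ > 1 with the following property: for every parameter λ with R_λ ≥ R⋆, every z ∈ ℂ with |z| = 1, every w₀ ∈ ℂ and every n₀ ∈ ℕ, if |Q^{n₀}_{λ,z}(w₀)| ≥ R_λ^α, then |Q^{n}_{λ,z}(w₀)| ≥ 2^{n−n₀}·|Q^{n₀}_{λ,z}(w₀)| for all n ≥ n₀. -/
noncomputable section

/-- The parameter space `ℂ^{D_d}` with the Euclidean norm, indexed by the pairs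
`(j,k)` with `0 ≤ j ≤ d-2` and `0 ≤ k ≤ d-j` (so of dimension `D_d = (d-1)(d+4)/2`). -/
abbrev Param (d : ℕ) := EuclideanSpace ℂ (Σ j : Fin (d - 1), Fin (d - (j : ℕ) + 1))

/-- The fiber polynomial `q_{λ,z}(w) = w^d + Σ_{j=0}^{d-2} (Σ_{k=0}^{d-j} a_{j,k}^{d-j} z^k) w^j`. -/
def qpoly (d : ℕ) (lam : Param d) (z w : ℂ) : ℂ :=
  w ^ d + ∑ j : Fin (d - 1),
    (∑ k : Fin (d - (j : ℕ) + 1), lam ⟨j, k⟩ ^ (d - (j : ℕ)) * z ^ (k : ℕ)) * w ^ (j : ℕ)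

/-- Non-autonomous fiberwise iterates along the base `p(z) = z^d`:
`Q⁰ = id`, `Q^{n+1}_{λ,z} = q_{λ, z^{d^n}} ∘ Q^n_{λ,z}`. -/
def Qit (d : ℕ) (lam : Param d) (z : ℂ) : ℕ → ℂ → ℂ
  | 0, w => w
  | n + 1, w => qpoly d lam (z ^ d ^ n) (Qit d lam z n w)

/-- `R_λ = Σ_{j=0}^{d-2} (Σ_{k=0}^{d-j} |a_{j,k}|^{d-j})^{1/(d-j)}` (real powers). -/
def Rlam (d : ℕ) (lam : Param d) : ℝ :=
  ∑ j : Fin (d - 1),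
    (∑ k : Fin (d - (j : ℕ) + 1), ‖lam ⟨j, k⟩‖ ^ (d - (j : ℕ))) ^ (((d - (j : ℕ) : ℕ) : ℝ))⁻¹

/-- Each inner coefficient sum is bounded by the corresponding power of `R_λ`. -/
lemma coeff_bound (d : ℕ) (lam : Param d) (j : Fin (d - 1)) :
    ∑ k : Fin (d - (j : ℕ) + 1), ‖lam ⟨j, k⟩‖ ^ (d - (j : ℕ)) ≤ Rlam d lam ^ (d - (j : ℕ)) := by
  have hj : (j : ℕ) < d - 1 := j.2
  have hdj : d - (j : ℕ) ≠ 0 := by omega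
  set S : ℝ := ∑ k : Fin (d - (j : ℕ) + 1), ‖lam ⟨j, k⟩‖ ^ (d - (j : ℕ)) with hS
  have hS0 : 0 ≤ S := by
    apply Finset.sum_nonneg; intro k _; positivity
  have key : (S ^ (((d - (j : ℕ) : ℕ) : ℝ))⁻¹) ^ (d - (j : ℕ)) = S :=
    Real.rpow_inv_natCast_pow hS0 hdj
  have hle : S ^ (((d - (j : ℕ) : ℕ) : ℝ))⁻¹ ≤ Rlam d lam := by
    apply Finset.single_le_sum (f := fun j : Fin (d-1) =>
      (∑ k : Fin (d - (j : ℕ) + 1), ‖lam ⟨j, k⟩‖ ^ (d - (j : ℕ))) ^ (((d - (j : ℕ) : ℕ) : ℝ))⁻¹)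
      (fun i _ => by positivity) (Finset.mem_univ j)
  calc S = (S ^ (((d - (j : ℕ) : ℕ) : ℝ))⁻¹) ^ (d - (j : ℕ)) := key.symm
    _ ≤ Rlam d lam ^ (d - (j : ℕ)) :=
        pow_le_pow_left₀ (Real.rpow_nonneg hS0 _) hle _

/-- One-step growth: above the radius `R_λ^α` the fiber polynomial doubles the modulus. -/
lemma qpoly_step (d : ℕ) (hd : 2 ≤ d) (α : ℝ) (hα : 1 < α) (lam : Param d)
    (hR2 : 2 ≤ Rlam d lam)
    (h4 : 4 ≤ Rlam d lam ^ α)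
    (hbig : 2 * d ≤ Rlam d lam ^ (2 * (α - 1)))
    (z : ℂ) (hz : ‖z‖ = 1) (w : ℂ) (hw : Rlam d lam ^ α ≤ ‖w‖) :
    2 * ‖w‖ ≤ ‖qpoly d lam z w‖ := by
  set R := Rlam d lam with hRdef
  have hR0 : (0:ℝ) < R := by linarith
  have hR1 : (1:ℝ) ≤ R := by linarith
  have hRα : R ≤ R ^ α := by
    nth_rewrite 1 [← Real.rpow_one R]
    exact Real.rpow_le_rpow_of_exponent_le hR1 hα.le
  set W := ‖w‖ with hWdef
  have hW0 : (0:ℝ) ≤ W := norm_nonneg w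
  have hW1 : (1:ℝ) ≤ W := by nlinarith
  have hWR : R ≤ W := le_trans hRα hw
  have hterm : ∀ j : Fin (d-1),
      ‖(∑ k : Fin (d - (j : ℕ) + 1), lam ⟨j, k⟩ ^ (d - (j : ℕ)) * z ^ (k : ℕ)) * w ^ (j : ℕ)‖
        ≤ R ^ 2 * W ^ (d - 2) := by
    intro j
    have hj : (j : ℕ) < d - 1 := j.2
    have hjd : (j : ℕ) + 2 ≤ d := by omega
    rw [norm_mul, norm_pow]
    have h1 : ‖∑ k : Fin (d - (j : ℕ) + 1), lam ⟨j, k⟩ ^ (d - (j : ℕ)) * z ^ (k : ℕ)‖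
        ≤ R ^ (d - (j : ℕ)) := by
      refine le_trans (norm_sum_le _ _) (le_trans (le_of_eq ?_) (coeff_bound d lam j))
      congr 1; ext k
      rw [norm_mul, norm_pow, norm_pow, hz, one_pow, mul_one]
    have e1 : R ^ (d - (j:ℕ)) = R ^ 2 * R ^ (d - (j:ℕ) - 2) := by
      rw [← pow_add]; congr 1; omega
    have e2 : (d - (j:ℕ) - 2) + (j : ℕ) = d - 2 := by omega
    calc ‖_‖ * W ^ (j : ℕ) ≤ R ^ (d - (j : ℕ)) * W ^ (j : ℕ) := by
          apply mul_le_mul_of_nonneg_right h1; positivity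
      _ = R ^ 2 * R ^ (d - (j:ℕ) - 2) * W ^ (j : ℕ) := by rw [e1]
      _ ≤ R ^ 2 * W ^ (d - (j:ℕ) - 2) * W ^ (j : ℕ) := by
          apply mul_le_mul_of_nonneg_right _ (by positivity)
          exact mul_le_mul_of_nonneg_left (pow_le_pow_left₀ hR0.le hWR _) (by positivity)
      _ = R ^ 2 * W ^ (d - 2) := by rw [mul_assoc, ← pow_add, e2]
  set s : ℂ := ∑ j : Fin (d - 1),
      (∑ k : Fin (d - (j : ℕ) + 1), lam ⟨j, k⟩ ^ (d - (j : ℕ)) * z ^ (k : ℕ)) * w ^ (j : ℕ) with hs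
  have hsum : ‖s‖ ≤ (d : ℝ) * (R ^ 2 * W ^ (d - 2)) := by
    refine le_trans (norm_sum_le _ _) ?_
    refine le_trans (Finset.sum_le_sum (fun j _ => hterm j)) ?_
    rw [Finset.sum_const, Finset.card_univ, Fintype.card_fin, nsmul_eq_mul]
    have h2 : ((d - 1 : ℕ) : ℝ) ≤ (d:ℝ) := by
      have := Nat.sub_le d 1; exact_mod_cast this
    exact mul_le_mul_of_nonneg_right h2 (by positivity)
  have hW2 : 2 * (d:ℝ) * R ^ 2 ≤ W ^ 2 := by
    have h1 : (R ^ α) ^ 2 ≤ W ^ 2 := pow_le_pow_left₀ (Real.rpow_nonneg hR0.le _) hw 2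
    have h2 : (R ^ α) ^ 2 = R ^ 2 * R ^ (2 * (α - 1)) := by
      rw [← Real.rpow_natCast (R ^ α) 2, ← Real.rpow_mul hR0.le, ← Real.rpow_natCast R 2,
        ← Real.rpow_add hR0]
      norm_num; ring_nf
    nlinarith [pow_nonneg hR0.le 2]
  have hWd1 : 4 ≤ W ^ (d - 1) := by
    have h1 : W ^ 1 ≤ W ^ (d - 1) := pow_le_pow_right₀ hW1 (by omega)
    have h2 : (4:ℝ) ≤ W := le_trans (le_trans h4 hw) le_rfl
    simpa using le_trans h2 (by simpa using h1)
  have hWd : W ^ d = W ^ 2 * W ^ (d - 2) := by rw [← pow_add]; congr 1; omega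
  have hWd' : W ^ d = W * W ^ (d - 1) := by
    rw [← pow_succ']; congr 1; omega
  have hmain : 2 * W + (d : ℝ) * (R ^ 2 * W ^ (d - 2)) ≤ W ^ d := by
    have hhalf : (d : ℝ) * (R ^ 2 * W ^ (d - 2)) ≤ W ^ d / 2 := by
      rw [hWd]; nlinarith [pow_nonneg hW0 (d-2)]
    have h2W : 2 * W ≤ W ^ d / 2 := by rw [hWd']; nlinarith
    linarith
  have htri : W ^ d ≤ ‖qpoly d lam z w‖ + ‖s‖ := by
    have h := norm_add_le (w ^ d + s) (-s)
    simp only [add_neg_cancel_right] at h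
    rw [show ‖-s‖ = ‖s‖ from norm_neg s] at h
    calc W ^ d = ‖w ^ d‖ := by rw [norm_pow]
      _ ≤ ‖w ^ d + s‖ + ‖s‖ := h
      _ = ‖qpoly d lam z w‖ + ‖s‖ := by rw [qpoly]
  linarith

/-- Lemma `rayoncritique`, item 1: escape estimate above the critical radius. -/
theorem escape_estimate (d : ℕ) (hd : 2 ≤ d) (α : ℝ) (hα : 1 < α) :
    ∃ Rstar : ℝ, 1 < Rstar ∧
      ∀ lam : Param d, Rstar ≤ Rlam d lam →
        ∀ z : ℂ, ‖z‖ = 1 → ∀ w₀ : ℂ, ∀ n₀ : ℕ,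
          Rlam d lam ^ α ≤ ‖Qit d lam z n₀ w₀‖ →
          ∀ n : ℕ, n₀ ≤ n →
            (2 : ℝ) ^ (n - n₀) * ‖Qit d lam z n₀ w₀‖ ≤
              ‖Qit d lam z n w₀‖ := by
  have hα0 : (0:ℝ) < α := by linarith
  have hβ0 : (0:ℝ) < 2 * (α - 1) := by linarith
  refine ⟨max 2 (max ((4:ℝ) ^ α⁻¹) ((2*(d:ℝ)) ^ (2*(α-1))⁻¹)), by
    have := le_max_left (2:ℝ) (max ((4:ℝ) ^ α⁻¹) ((2*(d:ℝ)) ^ (2*(α-1))⁻¹)); linarith, ?_⟩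
  intro lam hRstar z hz w₀ n₀ hesc
  set R := Rlam d lam with hRdef
  have hR2 : 2 ≤ R := le_trans (le_max_left _ _) hRstar
  have hR0 : (0:ℝ) < R := by linarith
  have h4 : (4:ℝ) ≤ R ^ α := by
    have hb : (4:ℝ) ^ α⁻¹ ≤ R :=
      le_trans (le_trans (le_max_left _ _) (le_max_right _ _)) hRstar
    have := Real.rpow_le_rpow (Real.rpow_nonneg (by norm_num) _) hb hα0.le
    rwa [Real.rpow_inv_rpow (by norm_num) hα0.ne'] at this
  have hbig : 2 * (d:ℝ) ≤ R ^ (2 * (α - 1)) := by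
    have hb : (2*(d:ℝ)) ^ (2*(α-1))⁻¹ ≤ R :=
      le_trans (le_trans (le_max_right _ _) (le_max_right _ _)) hRstar
    have := Real.rpow_le_rpow (Real.rpow_nonneg (by positivity) _) hb hβ0.le
    rwa [Real.rpow_inv_rpow (by positivity) hβ0.ne'] at this
  intro n hn
  induction n, hn using Nat.le_induction with
  | base =>
      simp
  | succ n hn ih =>
      have hpow1 : (1:ℝ) ≤ (2:ℝ) ^ (n - n₀) := one_le_pow₀ (by norm_num)
      have hA0 : (0:ℝ) ≤ ‖Qit d lam z n₀ w₀‖ := norm_nonneg _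
      have hQn : R ^ α ≤ ‖Qit d lam z n w₀‖ := by
        calc R ^ α = 1 * (R ^ α) := (one_mul _).symm
          _ ≤ (2:ℝ) ^ (n - n₀) * ‖Qit d lam z n₀ w₀‖ := by
              apply mul_le_mul hpow1 hesc (Real.rpow_nonneg hR0.le α) (by positivity)
          _ ≤ ‖Qit d lam z n w₀‖ := ih
      have habs1 : ‖z ^ d ^ n‖ = 1 := by
        rw [norm_pow, hz, one_pow]
      have hstep := qpoly_step d hd α hα lam hR2 h4 hbig (z ^ d ^ n) habs1
        (Qit d lam z n w₀) hQn
      have hrec : Qit d lam z (n + 1) w₀ = qpoly d lam (z ^ d ^ n) (Qit d lam z n w₀) := rfl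
      rw [hrec]
      have he : n + 1 - n₀ = (n - n₀) + 1 := by omega
      rw [he, pow_succ]
      calc (2:ℝ) ^ (n - n₀) * 2 * ‖Qit d lam z n₀ w₀‖
          = 2 * ((2:ℝ) ^ (n - n₀) * ‖Qit d lam z n₀ w₀‖) := by ring
        _ ≤ 2 * ‖Qit d lam z n w₀‖ := by linarith
        _ ≤ ‖qpoly d lam (z ^ d ^ n) (Qit d lam z n w₀)‖ := hstep
end
end

section
/- For every integer d ≥ 2 and every real α > 1 there exists R⋆ > 1 such that for every parameter λ with R_λ ≥ R⋆ there is a real number R' with 1 < R' < R_λ^α having the property: for every z ∈ ℂ with |z| = 1, every n ≥ 0 and every w ∈ ℂ, if |Q^{n+1}_{λ,z}(w)| < R_λ^α then |Q^{n}_{λ,z}(w)| < R'. (Equivalently, the preimage of the disc of radius R_λ^α under Q^{n+1}_{λ,z} is contained in the preimage of the disc of radius R' under Q^{n}_{λ,z}.) -/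
noncomputable section

set_option maxHeartbeats 1000000 in
lemma coef_le_Rlam (d : ℕ) (hd : 2 ≤ d) (lam : Param d) (j : Fin (d-1)) :
    (∑ k : Fin (d - (j:ℕ) + 1), ‖lam ⟨j, k⟩‖ ^ (d - (j:ℕ))) ≤ Rlam d lam ^ (d - (j:ℕ)) := by
  have hm : 0 < d - (j:ℕ) := by omega
  have hxle : (∑ k : Fin (d - (j:ℕ) + 1), ‖lam ⟨j, k⟩‖ ^ (d - (j:ℕ))) ^ (((d - (j:ℕ) : ℕ) : ℝ))⁻¹
      ≤ Rlam d lam := by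
    rw [Rlam]
    exact Finset.single_le_sum
      (f := fun i : Fin (d-1) =>
        (∑ k : Fin (d - (i:ℕ) + 1), ‖lam ⟨i, k⟩‖ ^ (d - (i:ℕ))) ^ (((d - (i:ℕ) : ℕ) : ℝ))⁻¹)
      (fun i _ => Real.rpow_nonneg (by positivity) _) (Finset.mem_univ j)
  have hsnn : (0:ℝ) ≤ ∑ k : Fin (d - (j:ℕ) + 1), ‖lam ⟨j, k⟩‖ ^ (d - (j:ℕ)) := by positivity
  have hxnn : (0:ℝ) ≤ (∑ k : Fin (d - (j:ℕ) + 1), ‖lam ⟨j, k⟩‖ ^ (d - (j:ℕ))) ^ (((d - (j:ℕ) : ℕ) : ℝ))⁻¹ :=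
    Real.rpow_nonneg hsnn _
  have key : ((∑ k : Fin (d - (j:ℕ) + 1), ‖lam ⟨j, k⟩‖ ^ (d - (j:ℕ))) ^ (((d - (j:ℕ) : ℕ) : ℝ))⁻¹) ^ (d - (j:ℕ))
      = ∑ k : Fin (d - (j:ℕ) + 1), ‖lam ⟨j, k⟩‖ ^ (d - (j:ℕ)) := by
    rw [← Real.rpow_natCast _ (d - (j:ℕ)), ← Real.rpow_mul hsnn,
      inv_mul_cancel₀ (by exact_mod_cast hm.ne'), Real.rpow_one]
  calc (∑ k : Fin (d - (j:ℕ) + 1), ‖lam ⟨j, k⟩‖ ^ (d - (j:ℕ)))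
      = ((∑ k : Fin (d - (j:ℕ) + 1), ‖lam ⟨j, k⟩‖ ^ (d - (j:ℕ))) ^ (((d - (j:ℕ) : ℕ) : ℝ))⁻¹) ^ (d - (j:ℕ)) := key.symm
    _ ≤ Rlam d lam ^ (d - (j:ℕ)) := pow_le_pow_left₀ hxnn hxle _

set_option maxHeartbeats 1000000 in
lemma abs_coef_le (d : ℕ) (lam : Param d) (z' : ℂ) (hz' : ‖z'‖ = 1) (j : Fin (d-1)) :
    ‖∑ k : Fin (d - (j:ℕ) + 1), lam ⟨j, k⟩ ^ (d - (j:ℕ)) * z' ^ (k:ℕ)‖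
      ≤ ∑ k : Fin (d - (j:ℕ) + 1), ‖lam ⟨j, k⟩‖ ^ (d - (j:ℕ)) := by
  refine (norm_sum_le _ _).trans (le_of_eq ?_)
  refine Finset.sum_congr rfl fun k _ => ?_
  rw [norm_mul, norm_pow, norm_pow, hz', one_pow, mul_one]

set_option maxHeartbeats 1000000 in
/-- Lemma `rayoncritique`, item 2: nested preimages of discs. -/
theorem nested_preimages (d : ℕ) (hd : 2 ≤ d) (α : ℝ) (hα : 1 < α) :
    ∃ Rstar : ℝ, 1 < Rstar ∧
      ∀ lam : Param d, Rstar ≤ Rlam d lam →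
        ∃ R' : ℝ, 1 < R' ∧ R' < Rlam d lam ^ α ∧
          ∀ z : ℂ, ‖z‖ = 1 → ∀ n : ℕ, ∀ w : ℂ,
            ‖Qit d lam z (n + 1) w‖ < Rlam d lam ^ α →
              ‖Qit d lam z n w‖ < R' := by
  have hdR : (2:ℝ) ≤ (d:ℝ) := by exact_mod_cast hd
  have hdne : ((d:ℕ):ℝ) ≠ 0 := by positivity
  set β : ℝ := min (α - 1) (α - α / d) with hβdef
  have hβpos : 0 < β := by
    apply lt_min (by linarith)
    have h1 : α / d ≤ α / 2 := by
      apply div_le_div_of_nonneg_left (by linarith) (by norm_num) hdR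
    linarith
  refine ⟨max 2 ((4*(d:ℝ)+1) ^ (β⁻¹ : ℝ)), lt_max_of_lt_left one_lt_two, ?_⟩
  intro lam hRs
  set R : ℝ := Rlam d lam with hRdef
  have hR2 : (2:ℝ) ≤ R := le_trans (le_max_left _ _) hRs
  have hRpos : (0:ℝ) < R := by linarith
  have hR1 : (1:ℝ) ≤ R := by linarith
  -- R ^ β ≥ 4d+1
  have hRb : (4*(d:ℝ)+1) ≤ R ^ β := by
    have hbase : ((4*(d:ℝ)+1) ^ (β⁻¹:ℝ)) ≤ R := le_trans (le_max_right _ _) hRs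
    have h := Real.rpow_le_rpow (Real.rpow_nonneg (by positivity) _) hbase hβpos.le
    rw [← Real.rpow_mul (by positivity), inv_mul_cancel₀ hβpos.ne', Real.rpow_one] at h
    exact h
  have h41 : (4*(d:ℝ)+1) * R ≤ R ^ α := by
    have e1 : R ^ (α-1) * R = R ^ α := by
      rw [← Real.rpow_add_one hRpos.ne' (α-1)]; congr 1; ring
    have h2 : R ^ β ≤ R ^ (α - 1) :=
      Real.rpow_le_rpow_of_exponent_le hR1 (min_le_left _ _)
    nlinarith
  have h42 : (4*(d:ℝ)+1) * R ^ (α/d) ≤ R ^ α := by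
    have e1 : R ^ (α - α/d) * R ^ (α/d) = R ^ α := by
      rw [← Real.rpow_add hRpos]; congr 1; ring
    have h2 : R ^ β ≤ R ^ (α - α/d) :=
      Real.rpow_le_rpow_of_exponent_le hR1 (min_le_right _ _)
    have h3 : (0:ℝ) < R ^ (α/d) := Real.rpow_pos_of_pos hRpos _
    nlinarith
  have hrad : (0:ℝ) < R ^ (α/d) := Real.rpow_pos_of_pos hRpos _
  refine ⟨2*(d:ℝ)*R + 2*(d:ℝ)*R^(α/d), by nlinarith, by nlinarith, ?_⟩
  intro z hz n w hlt
  by_contra hcon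
  push_neg at hcon
  set v : ℂ := Qit d lam z n w with hvdef
  set V : ℝ := ‖v‖ with hVdef
  have hz' : ‖z ^ d ^ n‖ = 1 := by rw [norm_pow, hz, one_pow]
  have hV1 : 2*(d:ℝ)*R ≤ V := by nlinarith
  have hV2 : 2*(d:ℝ)*R^(α/d) ≤ V := by nlinarith
  have hVpos : (0:ℝ) < V := by nlinarith
  -- bound each coefficient sum by R^(d-j)
  have hcoef : ∀ j : Fin (d-1),
      ‖∑ k : Fin (d - (j:ℕ) + 1), lam ⟨j, k⟩ ^ (d - (j:ℕ)) * (z ^ d ^ n) ^ (k:ℕ)‖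
        ≤ R ^ (d - (j:ℕ)) := by
    intro j
    exact (abs_coef_le d lam _ hz' j).trans (coef_le_Rlam d hd lam j)
  -- termwise bound
  have hterm : ∀ j : Fin (d-1), R ^ (d - (j:ℕ)) * V ^ (j:ℕ) ≤ V ^ d / (4*(d:ℝ)^2) := by
    intro j
    have hm2 : 2 ≤ d - (j:ℕ) := by omega
    have hRle : R ≤ V / (2*(d:ℝ)) := by
      rw [le_div_iff₀ (by positivity)]; nlinarith
    have h1 : R ^ (d - (j:ℕ)) ≤ (V/(2*(d:ℝ))) ^ (d - (j:ℕ)) := pow_le_pow_left₀ hRpos.le hRle _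
    calc R ^ (d - (j:ℕ)) * V ^ (j:ℕ)
        ≤ (V/(2*(d:ℝ))) ^ (d - (j:ℕ)) * V ^ (j:ℕ) :=
          mul_le_mul_of_nonneg_right h1 (pow_nonneg hVpos.le _)
      _ = V ^ d / (2*(d:ℝ)) ^ (d - (j:ℕ)) := by
          rw [div_pow, div_mul_eq_mul_div, ← pow_add]
          congr 2
          omega
      _ ≤ V ^ d / (4*(d:ℝ)^2) := by
          apply div_le_div_of_nonneg_left (pow_nonneg hVpos.le _) (by positivity)
          calc (4*(d:ℝ)^2) = (2*(d:ℝ))^2 := by ring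
            _ ≤ (2*(d:ℝ)) ^ (d - (j:ℕ)) := pow_le_pow_right₀ (by linarith) hm2
  -- bound the whole lower-order sum
  set S : ℂ := ∑ j : Fin (d - 1),
    (∑ k : Fin (d - (j:ℕ) + 1), lam ⟨j, k⟩ ^ (d - (j:ℕ)) * (z ^ d ^ n) ^ (k:ℕ)) * v ^ (j:ℕ) with hSdef
  have hScard : ‖S‖ ≤ ((d-1 : ℕ) : ℝ) * (V ^ d / (4*(d:ℝ)^2)) := by
    rw [hSdef]
    refine (norm_sum_le _ _).trans ?_
    have hb : ∀ j : Fin (d-1), j ∈ Finset.univ → ‖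
        (∑ k : Fin (d - (j:ℕ) + 1), lam ⟨j, k⟩ ^ (d - (j:ℕ)) * (z ^ d ^ n) ^ (k:ℕ)) * v ^ (j:ℕ)‖
        ≤ V ^ d / (4*(d:ℝ)^2) := by
      intro j _
      rw [norm_mul, norm_pow]
      refine le_trans (mul_le_mul_of_nonneg_right (hcoef j) (pow_nonneg (norm_nonneg v) _)) ?_
      exact hterm j
    refine (Finset.sum_le_card_nsmul _ _ _ hb).trans ?_
    simp [Finset.card_univ, nsmul_eq_mul]
  have hdcast : ((d-1 : ℕ) : ℝ) = (d:ℝ) - 1 := by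
    rw [Nat.cast_sub (by omega)]; norm_num
  have hVdnn : (0:ℝ) ≤ V ^ d := pow_nonneg hVpos.le _
  have hShalf : ‖S‖ ≤ V ^ d / 2 := by
    have hscal : ((d:ℝ)-1)/(4*(d:ℝ)^2) ≤ 1/2 := by
      rw [div_le_div_iff₀ (by positivity) (by norm_num)]
      nlinarith
    calc ‖S‖ ≤ ((d:ℝ)-1) * (V ^ d / (4*(d:ℝ)^2)) := by rw [← hdcast]; exact hScard
      _ = V ^ d * (((d:ℝ)-1)/(4*(d:ℝ)^2)) := by ring
      _ ≤ V ^ d * (1/2) := mul_le_mul_of_nonneg_left hscal hVdnn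
      _ = V ^ d / 2 := by ring
  -- V^d is large
  have hVd : 2 * (R ^ α) ≤ V ^ d := by
    have h1 : (2*(d:ℝ)*R^(α/d))^d ≤ V^d := pow_le_pow_left₀ (by positivity) hV2 d
    have h2 : (2*(d:ℝ)*R^(α/d))^d = (2*(d:ℝ))^d * R^α := by
      rw [mul_pow, ← Real.rpow_natCast (R^(α/d)) d, ← Real.rpow_mul hRpos.le]
      congr 2
      field_simp
    have h3 : (2:ℝ) ≤ (2*(d:ℝ))^d := by
      calc (2:ℝ) ≤ 2*(d:ℝ) := by linarith
        _ = (2*(d:ℝ))^1 := (pow_one _).symm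
        _ ≤ (2*(d:ℝ))^d := pow_le_pow_right₀ (by linarith) (by omega)
    have h4 : (0:ℝ) < R ^ α := Real.rpow_pos_of_pos hRpos _
    nlinarith
  -- triangle inequality
  have hQ : ‖Qit d lam z (n+1) w‖ = ‖v ^ d + S‖ := by
    rw [show Qit d lam z (n+1) w = qpoly d lam (z ^ d ^ n) v from rfl, qpoly]
  have htri : V ^ d ≤ ‖v ^ d + S‖ + ‖S‖ := by
    have h := norm_add_le (v ^ d + S) (-S)
    simpa [norm_pow] using h
  rw [hQ] at hlt
  linarith
end
end

section
/- Let d ≥ 2 and let z ∈ ℂ with |z| = 1. Then Acc^∞(𝓑_z) ⊆ E_z: if (λ_n) is a sequence in 𝓑_z with ‖λ_n‖ → ∞ and λ_n/‖λ_n‖ → μ, then the polynomials q_{μ,z} and q'_{μ,z} have a common root in ℂ. -/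
noncomputable section

/-- `𝓑_z`: parameters having a critical point with bounded fiberwise orbit over `z`. -/
def Bz (d : ℕ) (z : ℂ) : Set (Param d) :=
  {lam | ∃ c : ℂ, deriv (qpoly d lam z) c = 0 ∧
    Bornology.IsBounded (Set.range fun n => Qit d lam z n c)}

/-- Unit-sphere model of the cluster set at infinity of a set of parameters. -/
def AccInf (d : ℕ) (A : Set (Param d)) : Set (Param d) :=
  {μ | ‖μ‖ = 1 ∧ ∃ lamSeq : ℕ → Param d, (∀ n, lamSeq n ∈ A) ∧
    Filter.Tendsto (fun n => ‖lamSeq n‖) Filter.atTop Filter.atTop ∧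
    Filter.Tendsto (fun n => (‖lamSeq n‖)⁻¹ • lamSeq n) Filter.atTop (nhds μ)}

/-- `E_z`: unit-norm parameters `μ` such that `q_{μ,z}` and `q'_{μ,z}` have a common root. -/
def Ez (d : ℕ) (z : ℂ) : Set (Param d) :=
  {μ | ‖μ‖ = 1 ∧ ∃ c : ℂ, qpoly d μ z c = 0 ∧ deriv (qpoly d μ z) c = 0}

def qcoef (d : ℕ) (lam : Param d) (z : ℂ) (j : Fin (d - 1)) : ℂ :=
  ∑ k : Fin (d - (j : ℕ) + 1), lam ⟨j, k⟩ ^ (d - (j : ℕ)) * z ^ (k : ℕ)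
lemma qpoly_eq (d : ℕ) (lam : Param d) (z w : ℂ) :
    qpoly d lam z w = w ^ d + ∑ j : Fin (d - 1), qcoef d lam z j * w ^ (j : ℕ) := rfl
def dq (d : ℕ) (lam : Param d) (z w : ℂ) : ℂ :=
  d * w ^ (d - 1) + ∑ j : Fin (d - 1), qcoef d lam z j * ((j : ℕ) * w ^ ((j : ℕ) - 1))
lemma hasDerivAt_qpoly (d : ℕ) (lam : Param d) (z w : ℂ) :
    HasDerivAt (fun w => qpoly d lam z w) (dq d lam z w) w := by
  have h1 : HasDerivAt (fun w : ℂ => w ^ d) ((d : ℂ) * w ^ (d - 1)) w := hasDerivAt_pow d w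
  have h2 : ∀ j ∈ Finset.univ, HasDerivAt (fun w : ℂ => qcoef d lam z j * w ^ (j : ℕ))
      (qcoef d lam z j * ((j : ℕ) * w ^ ((j : ℕ) - 1))) w := fun j _ =>
    (hasDerivAt_pow (j : ℕ) w).const_mul _
  simpa [qpoly_eq, dq] using h1.fun_add (HasDerivAt.fun_sum h2)

lemma deriv_qpoly (d : ℕ) (lam : Param d) (z w : ℂ) :
    deriv (qpoly d lam z) w = dq d lam z w := (hasDerivAt_qpoly d lam z w).deriv

lemma smul_coord (d : ℕ) (r : ℝ) (lam : Param d) (i : Σ j : Fin (d - 1), Fin (d - (j : ℕ) + 1)) :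
    (r • lam) i = (r : ℂ) * lam i := by
  simp [PiLp.smul_apply, Complex.real_smul]

lemma jle (d : ℕ) (j : Fin (d - 1)) : (j : ℕ) ≤ d - 2 := by
  have := j.2; omega

lemma qcoef_smul (d : ℕ) (r : ℝ) (lam : Param d) (z : ℂ) (j : Fin (d - 1)) :
    qcoef d (r • lam) z j = (r : ℂ) ^ (d - (j : ℕ)) * qcoef d lam z j := by
  rw [qcoef, qcoef, Finset.mul_sum]
  refine Finset.sum_congr rfl fun k _ => ?_
  rw [smul_coord, mul_pow]; ring

lemma qpoly_smul (d : ℕ) (r : ℝ) (lam : Param d) (z w : ℂ) :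
    qpoly d (r • lam) z ((r : ℂ) * w) = (r : ℂ) ^ d * qpoly d lam z w := by
  rw [qpoly_eq, qpoly_eq, mul_add, Finset.mul_sum, mul_pow]
  congr 1
  refine Finset.sum_congr rfl fun j _ => ?_
  rw [qcoef_smul, mul_pow]
  have hj : (j : ℕ) ≤ d := by have := j.2; omega
  have : (r : ℂ) ^ (d - (j : ℕ)) * (r : ℂ) ^ (j : ℕ) = (r : ℂ) ^ d := by
    rw [← pow_add, Nat.sub_add_cancel hj]
  calc (r:ℂ) ^ (d - (j:ℕ)) * qcoef d lam z j * ((r:ℂ) ^ (j:ℕ) * w ^ (j:ℕ))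
      = ((r:ℂ) ^ (d - (j:ℕ)) * (r:ℂ) ^ (j:ℕ)) * (qcoef d lam z j * w ^ (j:ℕ)) := by ring
    _ = (r:ℂ) ^ d * (qcoef d lam z j * w ^ (j:ℕ)) := by rw [this]

lemma dq_smul (d : ℕ) (hd : 2 ≤ d) (r : ℝ) (lam : Param d) (z w : ℂ) :
    dq d (r • lam) z ((r : ℂ) * w) = (r : ℂ) ^ (d - 1) * dq d lam z w := by
  rw [dq, dq, mul_add, Finset.mul_sum, mul_pow]
  congr 1
  · ring
  refine Finset.sum_congr rfl fun j _ => ?_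
  rw [qcoef_smul]
  rcases Nat.eq_zero_or_pos (j : ℕ) with h0 | hpos
  · simp [h0]
  · have hj : (j : ℕ) ≤ d := by have := j.2; omega
    rw [mul_pow]
    have : (r : ℂ) ^ (d - (j : ℕ)) * (r : ℂ) ^ ((j : ℕ) - 1) = (r : ℂ) ^ (d - 1) := by
      rw [← pow_add]; congr 1; omega
    calc (r:ℂ) ^ (d - (j:ℕ)) * qcoef d lam z j * ((j:ℕ) * ((r:ℂ) ^ ((j:ℕ)-1) * w ^ ((j:ℕ)-1)))
        = ((r:ℂ) ^ (d - (j:ℕ)) * (r:ℂ) ^ ((j:ℕ)-1)) * (qcoef d lam z j * ((j:ℕ) * w ^ ((j:ℕ)-1))) := by ring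
      _ = _ := by rw [this]

lemma continuous_qpoly2 (d : ℕ) (z : ℂ) :
    Continuous fun p : Param d × ℂ => qpoly d p.1 z p.2 := by
  simp only [qpoly_eq]
  refine ((continuous_snd.pow d).add (continuous_finset_sum _ fun j _ => ?_))
  refine Continuous.mul ?_ (continuous_snd.pow _)
  refine continuous_finset_sum _ fun k _ => ?_
  exact ((((EuclideanSpace.proj (⟨j, k⟩ : Σ j : Fin (d-1), Fin (d - (j:ℕ) + 1))).continuous.comp
    continuous_fst).pow _).mul continuous_const)

lemma continuous_dq2 (d : ℕ) (z : ℂ) :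
    Continuous fun p : Param d × ℂ => dq d p.1 z p.2 := by
  simp only [dq, qcoef]
  refine (continuous_const.mul (continuous_snd.pow _)).add
    (continuous_finset_sum _ fun j _ => Continuous.mul ?_
      (continuous_const.mul (continuous_snd.pow _)))
  refine continuous_finset_sum _ fun k _ => ?_
  exact ((((EuclideanSpace.proj (⟨j, k⟩ : Σ j : Fin (d-1), Fin (d - (j:ℕ) + 1))).continuous.comp
    continuous_fst).pow _).mul continuous_const)

lemma escape_step (d : ℕ) (hd : 2 ≤ d) (lam : Param d) (t : ℝ) (ht : 1 ≤ t)
    (hb : ∀ i, ‖lam i‖ ≤ t) (z' : ℂ) (hz' : ‖z'‖ = 1)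
    (w : ℂ) (hw : 2 * d * t ≤ ‖w‖) :
    2 * ‖w‖ ≤ ‖qpoly d lam z' w‖ := by
  set A := ‖w‖ with hA
  have hd2 : (2 : ℝ) ≤ d := by exact_mod_cast hd
  have ht0 : (0 : ℝ) < t := lt_of_lt_of_le one_pos ht
  have hA4 : (4 : ℝ) ≤ A := le_trans (by nlinarith) hw
  have hA0 : (0 : ℝ) < A := by linarith
  have htA : t ≤ A := le_trans (by nlinarith) hw
  have hcoef : ∀ j : Fin (d - 1), ‖qcoef d lam z' j‖ ≤ (d + 1) * t ^ (d - (j : ℕ)) := by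
    intro j
    have hcard : ((d - (j : ℕ) + 1 : ℕ) : ℝ) ≤ (d : ℝ) + 1 := by
      have : d - (j : ℕ) + 1 ≤ d + 1 := by omega
      exact_mod_cast this
    calc ‖qcoef d lam z' j‖
        ≤ ∑ k : Fin (d - (j : ℕ) + 1), ‖lam ⟨j, k⟩ ^ (d - (j : ℕ)) * z' ^ (k : ℕ)‖ :=
          norm_sum_le _ _
      _ ≤ ∑ k : Fin (d - (j : ℕ) + 1), t ^ (d - (j : ℕ)) := by
          refine Finset.sum_le_sum fun k _ => ?_
          rw [norm_mul, norm_pow, norm_pow, hz', one_pow, mul_one]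
          exact pow_le_pow_left₀ (norm_nonneg _) (hb ⟨j, k⟩) _
      _ = ((d - (j : ℕ) + 1 : ℕ) : ℝ) * t ^ (d - (j : ℕ)) := by
          rw [Finset.sum_const, Finset.card_univ, Fintype.card_fin, nsmul_eq_mul]
      _ ≤ ((d : ℝ) + 1) * t ^ (d - (j : ℕ)) :=
          mul_le_mul_of_nonneg_right hcard (pow_nonneg ht0.le _)
  have hterm : ∀ j : Fin (d - 1),
      ‖qcoef d lam z' j‖ * A ^ (j : ℕ) ≤ ((d : ℝ) + 1) * (t ^ 2 * A ^ (d - 2)) := by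
    intro j
    have h1 : t ^ (d - (j : ℕ)) ≤ t ^ 2 * A ^ (d - (j : ℕ) - 2) := by
      have he : t ^ (d - (j : ℕ)) = t ^ 2 * t ^ (d - (j : ℕ) - 2) := by
        rw [← pow_add]; congr 1; have := j.2; omega
      rw [he]
      exact mul_le_mul_of_nonneg_left (pow_le_pow_left₀ ht0.le htA _) (by positivity)
    have h2 : t ^ (d - (j : ℕ)) * A ^ (j : ℕ) ≤ t ^ 2 * A ^ (d - 2) := by
      calc t ^ (d - (j : ℕ)) * A ^ (j : ℕ) ≤ (t ^ 2 * A ^ (d - (j : ℕ) - 2)) * A ^ (j : ℕ) :=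
            mul_le_mul_of_nonneg_right h1 (by positivity)
        _ = t ^ 2 * A ^ (d - 2) := by
            rw [mul_assoc, ← pow_add]; congr 2; have := j.2; omega
    calc ‖qcoef d lam z' j‖ * A ^ (j : ℕ)
        ≤ ((d : ℝ) + 1) * t ^ (d - (j : ℕ)) * A ^ (j : ℕ) :=
          mul_le_mul_of_nonneg_right (hcoef j) (by positivity)
      _ = ((d : ℝ) + 1) * (t ^ (d - (j : ℕ)) * A ^ (j : ℕ)) := by ring
      _ ≤ _ := mul_le_mul_of_nonneg_left h2 (by linarith)
  have hS : ‖∑ j : Fin (d - 1), qcoef d lam z' j * w ^ (j : ℕ)‖ ≤ A ^ d / 4 := by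
    have hcardd : ((d - 1 : ℕ) : ℝ) ≤ (d : ℝ) - 1 := by
      have h := Nat.cast_sub (by omega : 1 ≤ d) (R := ℝ)
      rw [h]; norm_num
    have hsum : ‖∑ j : Fin (d - 1), qcoef d lam z' j * w ^ (j : ℕ)‖ ≤
        ∑ j : Fin (d - 1), ((d : ℝ) + 1) * (t ^ 2 * A ^ (d - 2)) := by
      refine (norm_sum_le _ _).trans (Finset.sum_le_sum fun j _ => ?_)
      rw [norm_mul, norm_pow]
      exact hterm j
    rw [Finset.sum_const, Finset.card_univ, Fintype.card_fin, nsmul_eq_mul] at hsum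
    refine hsum.trans ?_
    have htA2 : t ≤ A / (2 * d) := by
      rw [le_div_iff₀ (by positivity)]; linarith [hw]
    have ht2 : t ^ 2 ≤ A ^ 2 / (4 * d ^ 2) := by
      calc t ^ 2 ≤ (A / (2 * d)) ^ 2 := pow_le_pow_left₀ ht0.le htA2 2
        _ = A ^ 2 / (4 * d ^ 2) := by ring
    have hAd : A ^ d = A ^ 2 * A ^ (d - 2) := by
      rw [← pow_add]; congr 1; omega
    have hP : (0 : ℝ) ≤ A ^ (d - 2) := by positivity
    have hdn : (d : ℝ) ≠ 0 := by positivity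
    calc ((d - 1 : ℕ) : ℝ) * (((d : ℝ) + 1) * (t ^ 2 * A ^ (d - 2)))
        ≤ ((d : ℝ) - 1) * (((d : ℝ) + 1) * (t ^ 2 * A ^ (d - 2))) :=
          mul_le_mul_of_nonneg_right hcardd (by positivity)
      _ = (((d : ℝ) - 1) * ((d : ℝ) + 1)) * (t ^ 2 * A ^ (d - 2)) := by ring
      _ ≤ (d : ℝ) ^ 2 * (t ^ 2 * A ^ (d - 2)) := by
          refine mul_le_mul_of_nonneg_right (by nlinarith) (by positivity)
      _ ≤ (d : ℝ) ^ 2 * ((A ^ 2 / (4 * d ^ 2)) * A ^ (d - 2)) := by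
          refine mul_le_mul_of_nonneg_left (mul_le_mul_of_nonneg_right ht2 hP) (by positivity)
      _ = A ^ d / 4 := by rw [hAd]; field_simp
  have habs : A ^ d - A ^ d / 4 ≤ ‖qpoly d lam z' w‖ := by
    set S := ∑ j : Fin (d - 1), qcoef d lam z' j * w ^ (j : ℕ) with hSdef
    have hwd : w ^ d = qpoly d lam z' w - S := by rw [qpoly_eq]; ring
    have h2 : ‖w ^ d‖ ≤ ‖qpoly d lam z' w‖ + ‖S‖ := by
      rw [hwd]
      simpa using norm_sub_le (qpoly d lam z' w) S
    rw [norm_pow] at h2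
    linarith [hS]
  have hAd2 : 2 * A ≤ A ^ d - A ^ d / 4 := by
    have hpow : A ≤ A ^ (d - 1) := by
      calc A = A ^ 1 := (pow_one A).symm
        _ ≤ A ^ (d - 1) := pow_le_pow_right₀ (by linarith) (by omega)
    have he : A ^ d = A ^ (d - 1) * A := by rw [← pow_succ]; congr 1; omega
    nlinarith
  linarith

lemma orbit_small (d : ℕ) (hd : 2 ≤ d) (lam : Param d) (t : ℝ) (ht : 1 ≤ t)
    (hb : ∀ i, ‖lam i‖ ≤ t) (z : ℂ) (hz : ‖z‖ = 1) (c : ℂ)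
    (hbdd : Bornology.IsBounded (Set.range fun n => Qit d lam z n c)) :
    ∀ m, ‖Qit d lam z m c‖ < 2 * d * t := by
  by_contra hcon
  push_neg at hcon
  obtain ⟨m, hm⟩ := hcon
  have hM0 : (0 : ℝ) < 2 * d * t := by
    have : (2 : ℝ) ≤ d := by exact_mod_cast hd
    nlinarith [lt_of_lt_of_le one_pos ht]
  have grow : ∀ k, 2 ^ k * (2 * d * t) ≤ ‖Qit d lam z (m + k) c‖ := by
    intro k
    induction k with
    | zero => simpa using hm
    | succ k ih =>
      have h1k : (1 : ℝ) ≤ 2 ^ k := one_le_pow₀ (by norm_num)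
      have hwk : 2 * d * t ≤ ‖Qit d lam z (m + k) c‖ := by nlinarith
      have hz' : ‖z ^ d ^ (m + k)‖ = 1 := by
        rw [norm_pow, hz, one_pow]
      have step := escape_step d hd lam t ht hb _ hz' _ hwk
      have : Qit d lam z (m + (k + 1)) c =
          qpoly d lam (z ^ d ^ (m + k)) (Qit d lam z (m + k) c) := rfl
      rw [this]
      calc (2 : ℝ) ^ (k + 1) * (2 * d * t) = 2 * (2 ^ k * (2 * d * t)) := by ring
        _ ≤ 2 * ‖Qit d lam z (m + k) c‖ := by linarith
        _ ≤ _ := step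
  obtain ⟨B, hB⟩ := (isBounded_iff_forall_norm_le.mp hbdd)
  obtain ⟨k, hk⟩ := pow_unbounded_of_one_lt (B / (2 * d * t)) (by norm_num : (1 : ℝ) < 2)
  have hBk : 2 ^ k * (2 * d * t) ≤ B := by
    refine (grow k).trans ?_
    have := hB _ ⟨m + k, rfl⟩
    simpa using this
  rw [div_lt_iff₀ hM0] at hk
  linarith

lemma coord_le_norm (d : ℕ) (lam : Param d) (i : Σ j : Fin (d - 1), Fin (d - (j : ℕ) + 1)) :
    ‖lam i‖ ≤ ‖lam‖ := by
  rw [EuclideanSpace.norm_eq]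
  have h1 : ‖lam i‖ ^ 2 ≤ ∑ j, ‖lam j‖ ^ 2 :=
    Finset.single_le_sum (fun j _ => sq_nonneg ‖lam j‖) (Finset.mem_univ i)
  calc ‖lam i‖ = Real.sqrt (‖lam i‖ ^ 2) := by rw [Real.sqrt_sq (norm_nonneg _)]
    _ ≤ _ := Real.sqrt_le_sqrt h1

set_option maxHeartbeats 1000000 in
/-- the cluster set at infinity of `𝓑_z` is contained in `E_z`. -/
theorem accInf_Bz_subset_Ez (d : ℕ) (hd : 2 ≤ d) (z : ℂ) (hz : ‖z‖ = 1) :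
    AccInf d (Bz d z) ⊆ Ez d z := by
  rintro μ ⟨hμ1, lamSeq, hmem, hnorm, hlim⟩
  refine ⟨hμ1, ?_⟩
  choose c hc1 hc2 using hmem
  obtain ⟨N, hN⟩ := Filter.eventually_atTop.mp (hnorm.eventually_ge_atTop 1)
  -- notation
  set t : ℕ → ℝ := fun n => ‖lamSeq n‖ with ht_def
  set ν : ℕ → Param d := fun n => (t n)⁻¹ • lamSeq n with hν_def
  set w : ℕ → ℂ := fun n => ((t n : ℝ) : ℂ)⁻¹ * c n with hw_def
  have key : ∀ n, N ≤ n → dq d (ν n) z (w n) = 0 ∧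
      ‖qpoly d (ν n) z (w n)‖ ≤ 2 * d / (t n) ^ (d - 1) ∧
      ‖w n‖ ≤ 2 * d := by
    intro n hn
    have hr1 : (1 : ℝ) ≤ t n := hN n hn
    have hr0 : (0 : ℝ) < t n := lt_of_lt_of_le one_pos hr1
    have hrR : t n ≠ 0 := hr0.ne'
    have hrC : ((t n : ℝ) : ℂ) ≠ 0 := Complex.ofReal_ne_zero.mpr hrR
    have hb : ∀ i, ‖lamSeq n i‖ ≤ t n := fun i => coord_le_norm d (lamSeq n) i
    have small := orbit_small d hd (lamSeq n) (t n) hr1 hb z hz (c n) (hc2 n)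
    have hc_small : ‖c n‖ < 2 * d * t n := by simpa [Qit] using small 0
    have hq_small : ‖qpoly d (lamSeq n) z (c n)‖ < 2 * d * t n := by
      have h1 := small 1
      simpa [Qit, pow_zero, pow_one] using h1
    have hsm : t n • ν n = lamSeq n := smul_inv_smul₀ hrR (lamSeq n)
    have hmc : ((t n : ℝ) : ℂ) * w n = c n := mul_inv_cancel_left₀ hrC (c n)
    -- derivative vanishes
    have hdq0 : dq d (ν n) z (w n) = 0 := by
      have hd_eq := dq_smul d hd (t n) (ν n) z (w n)
      rw [hsm, hmc] at hd_eq
      have hlam0 : dq d (lamSeq n) z (c n) = 0 := by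
        rw [← deriv_qpoly]; exact hc1 n
      rw [hlam0] at hd_eq
      rcases mul_eq_zero.mp hd_eq.symm with h | h
      · exact absurd h (pow_ne_zero _ hrC)
      · exact h
    -- value small
    have hq_eq := qpoly_smul d (t n) (ν n) z (w n)
    rw [hsm, hmc] at hq_eq
    have habs : ‖qpoly d (lamSeq n) z (c n)‖ =
        t n ^ d * ‖qpoly d (ν n) z (w n)‖ := by
      rw [hq_eq, norm_mul, norm_pow, Complex.norm_real, Real.norm_eq_abs, abs_of_pos hr0]
    have hqv : ‖qpoly d (ν n) z (w n)‖ ≤ 2 * d / t n ^ (d - 1) := by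
      rw [le_div_iff₀ (pow_pos hr0 _)]
      have he : t n ^ (d - 1) * t n = t n ^ d := by
        rw [← pow_succ]; congr 1; omega
      have h2 : t n ^ d * ‖qpoly d (ν n) z (w n)‖ < 2 * d * t n := by
        rw [← habs]; exact hq_small
      nlinarith [norm_nonneg (qpoly d (ν n) z (w n)), hr0, he, h2,
        pow_pos hr0 (d - 1)]
    -- w small
    have hwv : ‖w n‖ ≤ 2 * d := by
      have : ‖w n‖ = (t n)⁻¹ * ‖c n‖ := by
        rw [hw_def]
        simp [norm_mul, norm_inv, abs_of_pos hr0]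
      rw [this, inv_mul_le_iff₀ hr0]
      calc ‖c n‖ ≤ 2 * ↑d * t n := hc_small.le
        _ = t n * (2 * ↑d) := by ring
    exact ⟨hdq0, hqv, hwv⟩
  clear_value w ν t
  clear ht_def hν_def hw_def
  -- subsequence extraction
  have hdR : (0:ℝ) < 2 * d := by positivity
  have hu : ∀ k : ℕ, w (N + k) ∈ Metric.closedBall (0 : ℂ) (2 * d) := by
    intro k
    rw [Metric.mem_closedBall, dist_zero_right]
    exact (key (N + k) (Nat.le_add_right N k)).2.2
  obtain ⟨cinf, _, φ, hφmono, hφlim⟩ :=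
    (isCompact_closedBall (0 : ℂ) (2 * d)).tendsto_subseq hu
  have hφtop : Filter.Tendsto (fun k => N + φ k) Filter.atTop Filter.atTop :=
    Filter.tendsto_atTop_mono (fun k => Nat.le_add_left (φ k) N) hφmono.tendsto_atTop
  have hnu_lim : Filter.Tendsto (fun k => ν (N + φ k)) Filter.atTop (nhds μ) := hlim.comp hφtop
  have hw_lim : Filter.Tendsto (fun k => w (N + φ k)) Filter.atTop (nhds cinf) := hφlim
  have hpair : Filter.Tendsto (fun k => (ν (N + φ k), w (N + φ k))) Filter.atTop
      (nhds (μ, cinf)) := hnu_lim.prodMk_nhds hw_lim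
  -- qpoly value
  have hqcont : Filter.Tendsto (fun k => qpoly d (ν (N + φ k)) z (w (N + φ k)))
      Filter.atTop (nhds (qpoly d μ z cinf)) :=
    ((continuous_qpoly2 d z).tendsto (μ, cinf)).comp hpair
  have htν : Filter.Tendsto (fun k => t (N + φ k)) Filter.atTop Filter.atTop :=
    hnorm.comp hφtop
  have hg0 : Filter.Tendsto (fun k => 2 * (d : ℝ) / t (N + φ k) ^ (d - 1))
      Filter.atTop (nhds 0) :=
    Filter.Tendsto.div_atTop tendsto_const_nhds
      ((Filter.tendsto_pow_atTop (by omega : d - 1 ≠ 0)).comp htν)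
  have hq0seq : Filter.Tendsto (fun k => qpoly d (ν (N + φ k)) z (w (N + φ k)))
      Filter.atTop (nhds 0) := by
    refine squeeze_zero_norm (fun k => ?_) hg0
    exact (key (N + φ k) (Nat.le_add_right N _)).2.1
  have hq0 : qpoly d μ z cinf = 0 := tendsto_nhds_unique hqcont hq0seq
  have h1 := ((continuous_dq2 d z).tendsto (μ, cinf)).comp hpair
  have h2 : Filter.Tendsto (fun _ : ℕ => (0 : ℂ)) Filter.atTop (nhds (dq d μ z cinf)) :=
    Filter.Tendsto.congr (fun k => (key (N + φ k) (Nat.le_add_right N _)).1) h1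
  have hdq0 : dq d μ z cinf = 0 := tendsto_nhds_unique h2 tendsto_const_nhds
  exact ⟨cinf, hq0, by rw [deriv_qpoly]; exact hdq0⟩
end
end

section
/- Let d ≥ 2, R > 0 and let λ be an R-admissible parameter. Then f_λ has exactly d fixed points in the fiber π^{-1}(1): the set {w ∈ ℂ : q_{λ,1}(w) = w} has exactly d elements, and for every such w the point (1,w) belongs to J(f_λ). -/
noncomputable section

/-- The regular polynomial skew-product `f_λ(z,w) = (z^d, q_{λ,z}(w))`. -/
def fmap (d : ℕ) (lam : Param d) (p : ℂ × ℂ) : ℂ × ℂ := (p.1 ^ d, qpoly d lam p.1 p.2)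

/-- The fiberwise critical set over the unit circle. -/
def CritSet (d : ℕ) (lam : Param d) : Set (ℂ × ℂ) :=
  {p | ‖p.1‖ = 1 ∧ deriv (qpoly d lam p.1) p.2 = 0}

/-- The postcritical set `⋃_{n ≥ 1} f_λ^n(C_λ)`. -/
def PostCrit (d : ℕ) (lam : Param d) : Set (ℂ × ℂ) :=
  ⋃ n ∈ {n : ℕ | 1 ≤ n}, (fmap d lam)^[n] '' CritSet d lam

/-- `𝓜 = S¹ × 𝔻_R`. -/
def Mset (R : ℝ) : Set (ℂ × ℂ) := {p | ‖p.1‖ = 1 ∧ ‖p.2‖ < R}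

/-- `𝓜_n = f_λ^{-n}(𝓜)`. -/
def MsetN (d : ℕ) (lam : Param d) (R : ℝ) (n : ℕ) : Set (ℂ × ℂ) :=
  (fmap d lam)^[n] ⁻¹' Mset R

/-- The Julia set `J(f_λ) = {(z,w) : |z| = 1, (Q^n_{λ,z}(w))_n bounded}`. -/
def Julia (d : ℕ) (lam : Param d) : Set (ℂ × ℂ) :=
  {p | ‖p.1‖ = 1 ∧
    Bornology.IsBounded (Set.range fun n => Qit d lam p.1 n p.2)}

/-- `λ` is `R`-admissible: nested compact preimages, `f_λ : 𝓜₁ → 𝓜` is a `d²`-fold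
covering map, and `⋂ 𝓜_n = J(f_λ)`. -/
def Admissible (d : ℕ) (lam : Param d) (R : ℝ) : Prop :=
  (∀ n : ℕ, IsCompact (closure (MsetN d lam R (n + 1))) ∧
    closure (MsetN d lam R (n + 1)) ⊆ MsetN d lam R n) ∧
  (IsCoveringMapOn (fmap d lam) (Mset R) ∧
    ∀ p ∈ Mset R, (fmap d lam ⁻¹' {p}).ncard = d ^ 2) ∧
  (⋂ n : ℕ, MsetN d lam R n) = Julia d lam

open Metric Filter Set Function Polynomial Topology Bornology

private theorem injOn_iterate {g : ℂ → ℂ} {B : Set ℂ} (hmaps : Set.MapsTo g B B)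
    (hinj : Set.InjOn g B) : ∀ n, Set.InjOn (g^[n]) B := by
  intro n
  induction n with
  | zero => simpa using Set.injOn_id B
  | succ n ih =>
      intro x hx y hy hxy
      simp only [Function.iterate_succ_apply'] at hxy
      exact ih hx hy (hinj (hmaps.iterate n hx) (hmaps.iterate n hy) hxy)

private theorem dslope_iter_diff {w₀ : ℂ} {B : Set ℂ} (hBn : B ∈ 𝓝 w₀) :
    ∀ (k : ℕ) (f : ℂ → ℂ), DifferentiableOn ℂ f B →
      DifferentiableOn ℂ ((Function.swap dslope w₀)^[k] f) B := by
  intro k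
  induction k with
  | zero => intro f hf; simpa using hf
  | succ k ih =>
      intro f hf
      rw [Function.iterate_succ_apply']
      exact (Complex.differentiableOn_dslope hBn).mpr (ih f hf)

theorem key_no_parabolic {g : ℂ → ℂ} {R' : ℝ} {w₀ : ℂ}
    (hw : w₀ ∈ Metric.ball (0:ℂ) R')
    (hg : DifferentiableOn ℂ g (Metric.ball (0:ℂ) R'))
    (hmaps : Set.MapsTo g (Metric.ball (0:ℂ) R') (Metric.ball (0:ℂ) R'))
    (hinj : Set.InjOn g (Metric.ball (0:ℂ) R'))
    (hfix : g w₀ = w₀)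
    (hd1 : HasDerivAt g 1 w₀)
    (hnid : ¬ ∀ᶠ w in 𝓝 w₀, g w = w) : False := by
  set B := Metric.ball (0:ℂ) R' with hBdef
  have hBo : IsOpen B := Metric.isOpen_ball
  have hBn : B ∈ 𝓝 w₀ := hBo.mem_nhds hw
  have hw₀R : ‖w₀‖ < R' := by simpa [B, Metric.mem_ball, dist_zero_right] using hw
  have hR' : 0 < R' := lt_of_le_of_lt (norm_nonneg _) hw₀R
  -- iterates
  have hfixn : ∀ n, g^[n] w₀ = w₀ := fun n => Function.iterate_fixed hfix n
  have hgn : ∀ n, DifferentiableOn ℂ (g^[n]) B := fun n => hg.iterate hmaps n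
  have hderivn : ∀ n : ℕ, HasDerivAt (g^[n]) 1 w₀ := by
    intro n
    simpa using HasDerivAt.iterate w₀ hd1 hfix n
  -- φ and its order
  have hφan : AnalyticAt ℂ (fun w => g w - w) w₀ :=
    (hg.analyticAt hBn).sub (analyticAt_id)
  have hord : analyticOrderAt (fun w => g w - w) w₀ ≠ ⊤ := by
    intro h
    apply hnid
    have := analyticOrderAt_eq_top.mp h
    filter_upwards [this] with w hw using by linear_combination hw
  set m := (analyticOrderAt (fun w => g w - w) w₀).toNat with hmdef
  have hm : analyticOrderAt (fun w => g w - w) w₀ = (m : ℕ∞) := (ENat.natCast_toNat hord).symm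
  obtain ⟨h1, h1an, h1ne, heq⟩ := hφan.analyticOrderAt_eq_natCast.mp hm
  set b := h1 w₀ with hbdef
  -- base limit
  have lim1 : Tendsto (fun w => (g w - w) / (w - w₀) ^ m) (𝓝[≠] w₀) (𝓝 b) := by
    have h0 : Tendsto h1 (𝓝[≠] w₀) (𝓝 b) :=
      (h1an.continuousAt.tendsto).mono_left nhdsWithin_le_nhds
    apply h0.congr'
    filter_upwards [heq.filter_mono nhdsWithin_le_nhds,
      eventually_mem_nhdsWithin] with w hw hne
    have hne' : (w - w₀) ^ m ≠ 0 := pow_ne_zero _ (sub_ne_zero.mpr hne)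
    rw [hw, smul_eq_mul]
    field_simp
  -- main limit for all n
  have L : ∀ n : ℕ, Tendsto (fun w => (g^[n] w - w) / (w - w₀) ^ m) (𝓝[≠] w₀)
      (𝓝 ((n : ℂ) * b)) := by
    intro n
    induction n with
    | zero => simpa using tendsto_const_nhds
    | succ n ih =>
        have hBe : ∀ᶠ w in 𝓝[≠] w₀, w ∈ B :=
          eventually_nhdsWithin_of_eventually_nhds hBn
        have hne : ∀ᶠ w in 𝓝[≠] w₀, w ≠ w₀ := eventually_mem_nhdsWithin
        -- tendsto of u = g^[n]
        have hucont : ContinuousAt (g^[n]) w₀ :=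
          ((hgn n).differentiableAt hBn).continuousAt
        have hT2 : Tendsto (g^[n]) (𝓝[≠] w₀) (𝓝[≠] w₀) := by
          rw [tendsto_nhdsWithin_iff]
          constructor
          · refine Tendsto.mono_left ?_ nhdsWithin_le_nhds
            simpa [hfixn n] using hucont.tendsto
          · filter_upwards [hBe, hne] with w hwB hwne
            intro hcon
            exact hwne (injOn_iterate hmaps hinj n hwB hw (by rw [hcon, hfixn n]))
        have hT1 : Tendsto (fun w => (g (g^[n] w) - g^[n] w) / (g^[n] w - w₀) ^ m)
            (𝓝[≠] w₀) (𝓝 b) := lim1.comp hT2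
        have hT3 : Tendsto (fun w => ((g^[n] w - w₀) / (w - w₀)) ^ m) (𝓝[≠] w₀)
            (𝓝 1) := by
          have hs : Tendsto (slope (g^[n]) w₀) (𝓝[≠] w₀) (𝓝 1) :=
            hasDerivAt_iff_tendsto_slope.mp (hderivn n)
          have : Tendsto (fun w => (g^[n] w - w₀) / (w - w₀)) (𝓝[≠] w₀) (𝓝 1) := by
            apply hs.congr
            intro w
            rw [slope_def_field, hfixn n]
          simpa using this.pow m
        have := (hT1.mul hT3).add ih
        have hval : b * 1 + (n : ℂ) * b = ((n + 1 : ℕ) : ℂ) * b := by push_cast; ring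
        rw [hval] at this
        apply this.congr'
        filter_upwards [hBe, hne] with w hwB hwne
        have huB : g^[n] w ∈ B := hmaps.iterate n hwB
        have hune : g^[n] w ≠ w₀ := by
          intro hcon
          exact hwne (injOn_iterate hmaps hinj n hwB hw (by rw [hcon, hfixn n]))
        have h1' : (g^[n] w - w₀) ^ m ≠ 0 := pow_ne_zero _ (sub_ne_zero.mpr hune)
        have h2' : (w - w₀) ^ m ≠ 0 := pow_ne_zero _ (sub_ne_zero.mpr hwne)
        rw [Function.iterate_succ_apply']
        field_simp
        have hk : ((g^[n] w - w₀) / (w - w₀)) ^ m * (w - w₀) ^ m = (g^[n] w - w₀) ^ m := by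
          rw [div_pow, div_mul_cancel₀ _ h2']
        linear_combination (g (g^[n] w) - g^[n] w) * hk
  -- contradiction via maximum principle
  have hbpos : 0 < ‖b‖ := norm_pos_iff.mpr h1ne
  set ρ := (R' - ‖w₀‖) / 2 with hρdef
  have hρ : 0 < ρ := by
    have h := sub_pos.mpr hw₀R
    rw [hρdef]; linarith
  have hρ' : ρ ≠ 0 := ne_of_gt hρ
  have hsub : Metric.closedBall w₀ ρ ⊆ B := by
    intro x hx
    rw [Metric.mem_closedBall] at hx
    rw [hBdef, Metric.mem_ball, dist_zero_right]
    calc ‖x‖ = ‖x - w₀ + w₀‖ := by ring_nf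
    _ ≤ ‖x - w₀‖ + ‖w₀‖ := norm_add_le _ _
    _ ≤ ρ + ‖w₀‖ := by
        have : ‖x - w₀‖ = dist x w₀ := (dist_eq_norm _ _).symm
        linarith [hx, this ▸ hx]
    _ < R' := by rw [hρdef]; linarith
  set C0 := (R' + R') / ρ ^ m with hC0def
  have hCb : ∀ n : ℕ, (n : ℝ) * ‖b‖ ≤ C0 := by
    intro n
    set φn : ℂ → ℂ := fun w => g^[n] w - w with hφndef
    have hφn : DifferentiableOn ℂ φn B := (hgn n).sub differentiableOn_id
    set ψ := (Function.swap dslope w₀)^[m] φn with hψdef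
    have hψdiff : DifferentiableOn ℂ ψ B := dslope_iter_diff hBn m φn hφn
    -- limits of iterated dslopes
    have hlimj : ∀ j, j ≤ m →
        Tendsto (fun w => φn w / (w - w₀) ^ j) (𝓝[≠] w₀)
          (𝓝 (if j = m then (n : ℂ) * b else 0)) := by
      intro j hj
      rcases eq_or_lt_of_le hj with rfl | hjlt
      · simpa using L n
      · have hpow : Tendsto (fun w : ℂ => (w - w₀) ^ (m - j)) (𝓝[≠] w₀) (𝓝 0) := by
          have hc : Tendsto (fun w : ℂ => (w - w₀) ^ (m - j)) (𝓝 w₀) (𝓝 ((w₀ - w₀) ^ (m - j))) :=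
            (continuous_id.sub continuous_const).pow _ |>.tendsto w₀
          rw [sub_self, zero_pow (by omega : m - j ≠ 0)] at hc
          exact hc.mono_left nhdsWithin_le_nhds
        have := (L n).mul hpow
        rw [mul_zero] at this
        rw [if_neg (by omega)]
        apply this.congr'
        filter_upwards [eventually_mem_nhdsWithin] with w hwne
        have h2' : (w - w₀) ^ j ≠ 0 := pow_ne_zero _ (sub_ne_zero.mpr hwne)
        have h3' : (w - w₀) ^ m ≠ 0 := pow_ne_zero _ (sub_ne_zero.mpr hwne)
        rw [div_mul_eq_mul_div, div_eq_div_iff h3' h2', mul_assoc, ← pow_add]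
        congr 2
        omega
    have hval : ∀ j, j ≤ m → (∀ w, w ≠ w₀ →
        ((Function.swap dslope w₀)^[j] φn) w = φn w / (w - w₀) ^ j) := by
      intro j
      induction j with
      | zero => intro _ w _; simp
      | succ j ih =>
          intro hj w hwne
          have hj' : j ≤ m := by omega
          have hdiffj : DifferentiableOn ℂ ((Function.swap dslope w₀)^[j] φn) B :=
            dslope_iter_diff hBn j φn hφn
          have hcontj : Tendsto ((Function.swap dslope w₀)^[j] φn) (𝓝[≠] w₀)
              (𝓝 (((Function.swap dslope w₀)^[j] φn) w₀)) :=
            ((hdiffj.differentiableAt hBn).continuousAt.tendsto).mono_left nhdsWithin_le_nhds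
          have hlim0 : Tendsto ((Function.swap dslope w₀)^[j] φn) (𝓝[≠] w₀) (𝓝 0) := by
            have h0 := hlimj j hj'
            rw [if_neg (by omega)] at h0
            apply h0.congr'
            filter_upwards [eventually_mem_nhdsWithin] with v hvne
            exact (ih hj' v hvne).symm
          have hψj0 : ((Function.swap dslope w₀)^[j] φn) w₀ = 0 :=
            tendsto_nhds_unique hcontj hlim0
          rw [Function.iterate_succ_apply']
          show dslope ((Function.swap dslope w₀)^[j] φn) w₀ w = _
          rw [dslope_of_ne _ hwne, slope_def_field, hψj0, ih hj' w hwne, sub_zero,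
            pow_succ, div_div]
    have hψw₀ : ψ w₀ = (n : ℂ) * b := by
      have hcontm : Tendsto ψ (𝓝[≠] w₀) (𝓝 (ψ w₀)) :=
        ((hψdiff.differentiableAt hBn).continuousAt.tendsto).mono_left nhdsWithin_le_nhds
      have hlimm : Tendsto ψ (𝓝[≠] w₀) (𝓝 ((n : ℂ) * b)) := by
        have h0 := hlimj m le_rfl
        rw [if_pos rfl] at h0
        apply h0.congr'
        filter_upwards [eventually_mem_nhdsWithin] with v hvne
        exact (hval m le_rfl v hvne).symm
      exact tendsto_nhds_unique hcontm hlimm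
    -- maximum principle
    have hmax : ‖ψ w₀‖ ≤ C0 := by
      apply Complex.norm_le_of_forall_mem_frontier_norm_le (Metric.isBounded_ball
        (x := w₀) (r := ρ))
      · apply DifferentiableOn.diffContOnCl
        apply hψdiff.mono
        rw [closure_ball w₀ hρ']
        exact hsub
      · intro z hz
        rw [frontier_ball w₀ hρ'] at hz
        have hzρ : dist z w₀ = ρ := hz
        have hzne : z ≠ w₀ := by
          intro h; rw [h, dist_self] at hzρ; exact hρ' hzρ.symm
        have hzB : z ∈ B := hsub (Metric.mem_closedBall.mpr (le_of_eq hzρ))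
        rw [hψdef, hval m le_rfl z hzne, norm_div, norm_pow]
        have hnz : ‖z - w₀‖ = ρ := by rw [← dist_eq_norm]; exact hzρ
        rw [hnz]
        have h1z : ‖g^[n] z‖ < R' := by
          have := hmaps.iterate n hzB
          simpa [hBdef, Metric.mem_ball, dist_zero_right] using this
        have h2z : ‖z‖ < R' := by
          simpa [hBdef, Metric.mem_ball, dist_zero_right] using hzB
        have hφb : ‖φn z‖ ≤ R' + R' := by
          calc ‖φn z‖ = ‖g^[n] z - z‖ := rfl
          _ ≤ ‖g^[n] z‖ + ‖z‖ := norm_sub_le _ _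
          _ ≤ R' + R' := by linarith
        rw [hC0def]
        gcongr
      · exact subset_closure (Metric.mem_ball_self hρ)
    rw [hψw₀] at hmax
    calc (n : ℝ) * ‖b‖ = ‖(n : ℂ) * b‖ := by
          rw [norm_mul, Complex.norm_natCast]
    _ ≤ C0 := hmax
  obtain ⟨n, hn⟩ := exists_nat_gt (C0 / ‖b‖)
  have := hCb n
  rw [div_lt_iff₀ hbpos] at hn
  linarith


theorem exists_poly_section (p : Polynomial ℂ) {R' : ℝ} (hR' : 0 < R')
    (hne : ∀ x : ℂ, ‖Polynomial.eval x p‖ ≤ R' → Polynomial.eval x p.derivative ≠ 0)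
    (hbd : Bornology.IsBounded {x : ℂ | ‖Polynomial.eval x p‖ ≤ R'})
    {x₀ : ℂ} (hx₀ : ‖Polynomial.eval x₀ p‖ < R') :
    ∃ g : ℂ → ℂ, DifferentiableOn ℂ g (Metric.ball 0 R') ∧
      (∀ c ∈ Metric.ball (0:ℂ) R', Polynomial.eval (g c) p = c) ∧
      g (Polynomial.eval x₀ p) = x₀ := by
  classical
  set F : ℂ → ℂ := fun x => Polynomial.eval x p with hFdef
  set X : Set ℂ := {x : ℂ | ‖F x‖ ≤ R'} with hXdef
  have hFc : Continuous F := p.continuous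
  have hXclosed : IsClosed X := isClosed_le (hFc.norm) continuous_const
  have hXc : IsCompact X := Metric.isCompact_of_isClosed_isBounded hXclosed hbd
  have hx₀X : x₀ ∈ X := le_of_lt hx₀
  -- partial homeomorphisms around each point of X
  have hEex : ∀ x ∈ X, ∃ E : OpenPartialHomeomorph ℂ ℂ, (⇑E = F) ∧ x ∈ E.source := by
    intro x hx
    have hsd := p.hasStrictDerivAt x
    have h' := (hsd.hasStrictFDerivAt_equiv (hne x hx))
    exact ⟨h'.toOpenPartialHomeomorph F, h'.toOpenPartialHomeomorph_coe, h'.mem_toOpenPartialHomeomorph_source⟩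
  haveI : Nonempty (OpenPartialHomeomorph ℂ ℂ) := ⟨OpenPartialHomeomorph.refl ℂ⟩
  choose! E hEcoe hEmem using hEex
  have hrex : ∀ x ∈ X, ∃ r : ℝ, 0 < r ∧ Metric.closedBall x (3 * r) ⊆ (E x).source := by
    intro x hx
    obtain ⟨ε, hε, hsub⟩ := Metric.isOpen_iff.mp (E x).open_source x (hEmem x hx)
    exact ⟨ε / 4, by linarith, fun y hy => hsub (by
      rw [Metric.mem_closedBall] at hy
      rw [Metric.mem_ball]
      linarith)⟩
  choose! r hrpos hrsub using hrex
  -- first cover: uniform injectivity radius σ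
  obtain ⟨t₁, ht₁X, ht₁cov⟩ := hXc.elim_nhds_subcover (fun x => Metric.ball x (r x))
    (fun x hx => Metric.ball_mem_nhds x (hrpos x hx))
  have ht₁ne : t₁.Nonempty := by
    obtain ⟨T, hT⟩ := Set.mem_iUnion.mp (ht₁cov hx₀X)
    obtain ⟨hTmem, hTx⟩ := Set.mem_iUnion.mp hT
    exact ⟨T, hTmem⟩
  set σ : ℝ := t₁.inf' ht₁ne r with hσdef
  have hσpos : 0 < σ := by
    rw [hσdef, Finset.lt_inf'_iff]
    exact fun b hb => hrpos b (ht₁X b hb)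
  have hU1 : ∀ x ∈ X, Set.InjOn F (Metric.closedBall x σ) := by
    intro x hx
    obtain ⟨T, hT⟩ := Set.mem_iUnion.mp (ht₁cov hx)
    obtain ⟨hTmem, hTx⟩ := Set.mem_iUnion.mp hT
    have hTX : T ∈ X := ht₁X T hTmem
    have hσle : σ ≤ r T := Finset.inf'_le r hTmem
    have hsub2 : Metric.closedBall x σ ⊆ (E T).source := by
      intro y hy
      apply hrsub T hTX
      rw [Metric.mem_closedBall] at hy ⊢
      have h1 : dist x T < r T := Metric.mem_ball.mp hTx
      calc dist y T ≤ dist y x + dist x T := dist_triangle _ _ _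
      _ ≤ σ + r T := by linarith
      _ ≤ 3 * r T := by linarith
    have := (E T).injOn.mono hsub2
    rwa [hEcoe T hTX] at this
  -- second cover: uniform openness radius τ
  set β : ℂ → ℝ := fun x => min (σ / 6) (r x) / 2 with hβdef
  have hβpos : ∀ x ∈ X, 0 < β x := fun x hx => by
    have := hrpos x hx
    rw [hβdef]
    simp only
    have : 0 < min (σ / 6) (r x) := lt_min (by linarith) this
    linarith
  obtain ⟨t₂, ht₂X, ht₂cov⟩ := hXc.elim_nhds_subcover (fun x => Metric.ball x (β x))
    (fun x hx => Metric.ball_mem_nhds x (hβpos x hx))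
  have ht₂ne : t₂.Nonempty := by
    obtain ⟨T, hT⟩ := Set.mem_iUnion.mp (ht₂cov hx₀X)
    obtain ⟨hTmem, hTx⟩ := Set.mem_iUnion.mp hT
    exact ⟨T, hTmem⟩
  have hδex : ∀ T ∈ X, ∃ δ : ℝ, 0 < δ ∧
      Metric.thickening δ (F '' (Metric.closedBall T (β T))) ⊆
        F '' (Metric.ball T (min (σ / 6) (r T))) := by
    intro T hT
    have hWopen : IsOpen (F '' (Metric.ball T (min (σ / 6) (r T)))) := by
      rw [← hEcoe T hT]
      apply (E T).isOpen_image_of_subset_source Metric.isOpen_ball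
      intro y hy
      apply hrsub T hT
      rw [Metric.mem_ball] at hy
      rw [Metric.mem_closedBall]
      have h1 : min (σ / 6) (r T) ≤ r T := min_le_right _ _
      have h2 : 0 < r T := hrpos T hT
      calc dist y T ≤ min (σ / 6) (r T) := le_of_lt hy
      _ ≤ r T := h1
      _ ≤ 3 * r T := by linarith
    have hCcomp : IsCompact (F '' (Metric.closedBall T (β T))) :=
      (isCompact_closedBall _ _).image hFc
    have hCsub : F '' (Metric.closedBall T (β T)) ⊆
        F '' (Metric.ball T (min (σ / 6) (r T))) := by
      apply Set.image_mono
      intro y hy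
      rw [Metric.mem_closedBall] at hy
      rw [Metric.mem_ball]
      have h2 : 0 < min (σ / 6) (r T) := lt_min (by linarith) (hrpos T hT)
      rw [hβdef] at hy
      simp only at hy
      linarith
    obtain ⟨δ, hδpos, hδ⟩ := hCcomp.exists_thickening_subset_open hWopen hCsub
    exact ⟨δ, hδpos, hδ⟩
  choose! δ hδpos hδsub using hδex
  set τ : ℝ := t₂.inf' ht₂ne δ with hτdef
  have hτpos : 0 < τ := by
    rw [hτdef, Finset.lt_inf'_iff]
    exact fun b hb => hδpos b (ht₂X b hb)
  have hU2 : ∀ x ∈ X, Metric.ball (F x) τ ⊆ F '' (Metric.ball x (σ / 3)) := by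
    intro x hx
    obtain ⟨T, hT⟩ := Set.mem_iUnion.mp (ht₂cov hx)
    obtain ⟨hTmem, hTx⟩ := Set.mem_iUnion.mp hT
    have hTX : T ∈ X := ht₂X T hTmem
    have hτle : τ ≤ δ T := Finset.inf'_le δ hTmem
    intro y hy
    have hyt : y ∈ Metric.thickening (δ T) (F '' (Metric.closedBall T (β T))) := by
      rw [Metric.mem_thickening_iff]
      refine ⟨F x, Set.mem_image_of_mem F ?_, ?_⟩
      · rw [Metric.mem_closedBall]
        exact le_of_lt (Metric.mem_ball.mp hTx)
      · rw [Metric.mem_ball] at hy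
        calc dist y (F x) < τ := hy
        _ ≤ δ T := hτle
    have := hδsub T hTX hyt
    obtain ⟨z, hz, hzy⟩ := this
    refine ⟨z, ?_, hzy⟩
    rw [Metric.mem_ball] at hz ⊢
    have hxT : dist x T < β T := Metric.mem_ball.mp hTx
    have hβσ : β T ≤ σ / 12 := by
      rw [hβdef]
      simp only
      have : min (σ / 6) (r T) ≤ σ / 6 := min_le_left _ _
      linarith
    have hγσ : min (σ / 6) (r T) ≤ σ / 6 := min_le_left _ _
    calc dist z x ≤ dist z T + dist T x := dist_triangle _ _ _
    _ < min (σ / 6) (r T) + β T := by rw [dist_comm T x]; linarith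
    _ ≤ σ / 6 + σ / 12 := by linarith
    _ ≤ σ / 3 := by linarith
  -- choose N and the segment family
  set c₀ : ℂ := F x₀ with hc₀def
  have hc₀ball : c₀ ∈ Metric.ball (0:ℂ) R' := mem_ball_zero_iff.mpr hx₀
  obtain ⟨N₀, hN₀⟩ := exists_nat_gt (2 * R' / τ)
  set N : ℕ := N₀ + 1 with hNdef
  have hNpos : (0:ℝ) < (N:ℝ) := by positivity
  have hNτ : 2 * R' / (N:ℝ) < τ := by
    have h1 : 2 * R' / τ < (N:ℝ) := lt_of_lt_of_le hN₀ (by exact_mod_cast Nat.le_succ N₀)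
    rw [div_lt_iff₀ hτpos] at h1
    rw [div_lt_iff₀ hNpos]
    linarith
  set seg : ℂ → ℕ → ℂ := fun c i => c₀ + (((i:ℝ) / (N:ℝ)) : ℝ) • (c - c₀) with hsegdef
  have hseg0 : ∀ c, seg c 0 = c₀ := by intro c; simp [hsegdef]
  have hsegN : ∀ c, seg c N = c := by
    intro c
    rw [hsegdef]
    simp only [div_self (ne_of_gt hNpos), one_smul]
    ring
  have hsegc₀ : ∀ i, seg c₀ i = c₀ := by intro i; simp [hsegdef]
  have hsegmem : ∀ i, i ≤ N → ∀ c ∈ Metric.ball (0:ℂ) R', seg c i ∈ Metric.ball (0:ℂ) R' := by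
    intro i hi c hc
    have ht0 : (0:ℝ) ≤ (i:ℝ)/(N:ℝ) := by positivity
    have ht1 : (i:ℝ)/(N:ℝ) ≤ 1 := by
      rw [div_le_one hNpos]; exact_mod_cast hi
    have hrepr : seg c i = (1 - (i:ℝ)/(N:ℝ)) • c₀ + ((i:ℝ)/(N:ℝ)) • c := by
      rw [hsegdef]
      simp only
      rw [smul_sub]
      module
    rw [hrepr]
    exact (convex_ball (0:ℂ) R') hc₀ball hc (by linarith) ht0 (by ring)
  have hsegstep : ∀ (i : ℕ), ∀ c ∈ Metric.ball (0:ℂ) R', dist (seg c (i+1)) (seg c i) < τ := by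
    intro i c hc
    have hdiff : seg c (i+1) - seg c i = ((1:ℝ)/(N:ℝ)) • (c - c₀) := by
      rw [hsegdef]
      simp only
      rw [add_sub_add_left_eq_sub, ← sub_smul]
      congr 1
      push_cast
      field_simp
      ring
    rw [dist_eq_norm, hdiff, norm_smul]
    have hc' : ‖c‖ < R' := mem_ball_zero_iff.mp hc
    have hc₀' : ‖c₀‖ < R' := mem_ball_zero_iff.mp hc₀ball
    have h1 : ‖c - c₀‖ ≤ ‖c‖ + ‖c₀‖ := norm_sub_le _ _
    have h2 : ‖(1:ℝ)/(N:ℝ)‖ = 1/(N:ℝ) := by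
      rw [Real.norm_eq_abs, abs_of_pos (by positivity)]
    rw [h2]
    calc 1/(N:ℝ) * ‖c - c₀‖ ≤ 1/(N:ℝ) * (2 * R') := by
          apply mul_le_mul_of_nonneg_left ?_ (by positivity)
          linarith
    _ = 2 * R' / (N:ℝ) := by ring
    _ < τ := hNτ
  -- the inductive construction of partial lifts
  have main : ∀ i : ℕ, i ≤ N → ∃ G : ℂ → ℂ,
      DifferentiableOn ℂ G (Metric.ball 0 R') ∧
      (∀ c ∈ Metric.ball (0:ℂ) R', F (G c) = seg c i) ∧ G c₀ = x₀ := by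
    intro i
    induction i with
    | zero =>
        intro _
        exact ⟨fun _ => x₀, differentiableOn_const _,
          fun c _ => by rw [hseg0], rfl⟩
    | succ i ih =>
        intro hiN
        obtain ⟨G, hGdiff, hGsec, hGc₀⟩ := ih (by omega)
        have hGX : ∀ c ∈ Metric.ball (0:ℂ) R', G c ∈ X := by
          intro c hc
          have : ‖F (G c)‖ ≤ R' := by
            rw [hGsec c hc]
            exact le_of_lt (mem_ball_zero_iff.mp (hsegmem i (by omega) c hc))
          exact this
        have hEU : ∀ c ∈ Metric.ball (0:ℂ) R', ∃! x : ℂ,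
            F x = seg c (i+1) ∧ x ∈ Metric.closedBall (G c) (σ/3) := by
          intro c hc
          have hGcX := hGX c hc
          have hseg' : seg c (i+1) ∈ Metric.ball (F (G c)) τ := by
            rw [Metric.mem_ball, hGsec c hc]
            exact hsegstep i c hc
          obtain ⟨x, hxmem, hxeval⟩ := hU2 (G c) hGcX hseg'
          refine ⟨x, ⟨hxeval, Metric.mem_closedBall.mpr (le_of_lt (Metric.mem_ball.mp hxmem))⟩, ?_⟩
          rintro y ⟨hy1, hy2⟩
          apply hU1 (G c) hGcX
          · rw [Metric.mem_closedBall] at hy2 ⊢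
            have : 0 < σ := hσpos
            linarith
          · rw [Metric.mem_closedBall]
            have := Metric.mem_ball.mp hxmem
            have : dist x (G c) ≤ σ/3 := le_of_lt this
            linarith [hσpos]
          · rw [hy1, hxeval]
        set G' : ℂ → ℂ := fun c =>
          if h : ∃ x : ℂ, F x = seg c (i+1) ∧ x ∈ Metric.closedBall (G c) (σ/3)
          then h.choose else x₀ with hG'def
        have hG'spec : ∀ c ∈ Metric.ball (0:ℂ) R',
            F (G' c) = seg c (i+1) ∧ G' c ∈ Metric.closedBall (G c) (σ/3) := by
          intro c hc
          have h := (hEU c hc).exists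
          rw [hG'def]
          simp only [dif_pos h]
          exact h.choose_spec
        have hG'c₀ : G' c₀ = x₀ := by
          have h := hEU c₀ hc₀ball
          have h1 : F x₀ = seg c₀ (i+1) ∧ x₀ ∈ Metric.closedBall (G c₀) (σ/3) := by
            constructor
            · rw [hsegc₀]
            · rw [hGc₀]
              exact Metric.mem_closedBall_self (by positivity)
          exact h.unique (hG'spec c₀ hc₀ball) h1
        have hsegcont : Continuous (fun c => seg c (i+1)) := by
          rw [hsegdef]
          fun_prop
        have hsegdiffAt : ∀ c₁ : ℂ, DifferentiableAt ℂ (fun c => seg c (i+1)) c₁ := by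
          intro c₁
          rw [hsegdef]
          simp only
          apply DifferentiableAt.const_add
          fun_prop
        have hG'diff : DifferentiableOn ℂ G' (Metric.ball 0 R') := by
          intro c₁ hc₁
          apply DifferentiableAt.differentiableWithinAt
          have hspec₁ := hG'spec c₁ hc₁
          have hxstarX : G' c₁ ∈ X := by
            have : ‖F (G' c₁)‖ ≤ R' := by
              rw [hspec₁.1]
              exact le_of_lt (mem_ball_zero_iff.mp (hsegmem (i+1) hiN c₁ hc₁))
            exact this
          have hsd := p.hasStrictDerivAt (G' c₁)
          have hF' := hsd.hasStrictFDerivAt_equiv (hne (G' c₁) hxstarX)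
          have hFx : F (G' c₁) = seg c₁ (i+1) := hspec₁.1
          have hsegt : Tendsto (fun c => seg c (i+1)) (𝓝 c₁) (𝓝 (F (G' c₁))) := by
            rw [hFx]
            exact hsegcont.continuousAt
          have hev : G' =ᶠ[𝓝 c₁] fun c => hF'.localInverse _ _ _ (seg c (i+1)) := by
            have e1 : ∀ᶠ c in 𝓝 c₁, c ∈ Metric.ball (0:ℂ) R' :=
              Metric.isOpen_ball.eventually_mem hc₁
            have e2' : ∀ᶠ c in 𝓝 c₁,
                F (hF'.localInverse _ _ _ (seg c (i+1))) = seg c (i+1) :=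
              hsegt.eventually hF'.eventually_right_inverse
            have e3 : ∀ᶠ c in 𝓝 c₁,
                hF'.localInverse _ _ _ (seg c (i+1)) ∈ Metric.ball (G' c₁) (σ/3) := by
              have hcont : ContinuousAt (hF'.localInverse _ _ _) (F (G' c₁)) :=
                hF'.localInverse_continuousAt
              have hvalli : hF'.localInverse _ _ _ (F (G' c₁)) = G' c₁ :=
                hF'.localInverse_apply_image
              have htd : Tendsto (fun c => hF'.localInverse _ _ _ (seg c (i+1))) (𝓝 c₁)
                  (𝓝 (G' c₁)) := by
                have := hcont.tendsto.comp hsegt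
                rwa [hvalli] at this
              exact htd (Metric.ball_mem_nhds _ (by positivity))
            have e4 : ∀ᶠ c in 𝓝 c₁, G c ∈ Metric.ball (G c₁) (σ/3) := by
              have hGcont : ContinuousAt G c₁ :=
                (hGdiff.differentiableAt (Metric.isOpen_ball.mem_nhds hc₁)).continuousAt
              exact hGcont (Metric.ball_mem_nhds _ (by positivity))
            filter_upwards [e1, e2', e3, e4] with c hc hre hli hG4
            have hGcX := hGX c hc
            apply hU1 (G c) hGcX
            · rw [Metric.mem_closedBall]
              have := Metric.mem_closedBall.mp (hG'spec c hc).2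
              linarith [hσpos]
            · rw [Metric.mem_closedBall]
              have d1 : dist (hF'.localInverse _ _ _ (seg c (i+1))) (G' c₁) < σ/3 :=
                Metric.mem_ball.mp hli
              have d2 : dist (G' c₁) (G c₁) ≤ σ/3 := Metric.mem_closedBall.mp hspec₁.2
              have d3 : dist (G c₁) (G c) < σ/3 := by
                rw [dist_comm]
                exact Metric.mem_ball.mp hG4
              calc dist (hF'.localInverse _ _ _ (seg c (i+1))) (G c)
                  ≤ dist (hF'.localInverse _ _ _ (seg c (i+1))) (G' c₁) + dist (G' c₁) (G c) :=
                    dist_triangle _ _ _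
              _ ≤ dist (hF'.localInverse _ _ _ (seg c (i+1))) (G' c₁) +
                    (dist (G' c₁) (G c₁) + dist (G c₁) (G c)) := by
                    linarith [dist_triangle (G' c₁) (G c₁) (G c)]
              _ ≤ σ := by linarith
            · rw [(hG'spec c hc).1, hre]
          have hlidiff : DifferentiableAt ℂ (hF'.localInverse _ _ _) (F (G' c₁)) :=
            hF'.to_localInverse.differentiableAt
          have hcompdiff : DifferentiableAt ℂ
              (fun c => hF'.localInverse _ _ _ (seg c (i+1))) c₁ := by
            apply DifferentiableAt.comp
            · rw [hFx] at hlidiff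
              exact hlidiff
            · exact hsegdiffAt c₁
          exact hcompdiff.congr_of_eventuallyEq hev
        exact ⟨G', hG'diff, fun c hc => (hG'spec c hc).1, hG'c₀⟩
  obtain ⟨G, hGdiff, hGsec, hGc₀⟩ := main N le_rfl
  refine ⟨G, hGdiff, fun c hc => ?_, hGc₀⟩
  show F (G c) = c
  rw [hGsec c hc, hsegN]


/-- The fiber polynomial as a `Polynomial ℂ`. -/
noncomputable def Qzp (d : ℕ) (lam : Param d) (z : ℂ) : Polynomial ℂ :=
  Polynomial.X ^ d + ∑ j : Fin (d - 1),
    Polynomial.C (∑ k : Fin (d - (j : ℕ) + 1), lam ⟨j, k⟩ ^ (d - (j : ℕ)) * z ^ (k : ℕ)) *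
      Polynomial.X ^ (j : ℕ)

theorem eval_Qzp (d : ℕ) (lam : Param d) (z w : ℂ) :
    (Qzp d lam z).eval w = qpoly d lam z w := by
  simp [Qzp, qpoly, Polynomial.eval_finset_sum]

theorem Qzp_tail_degree_lt (d : ℕ) (hd : 2 ≤ d) (lam : Param d) (z : ℂ) :
    (∑ j : Fin (d - 1),
      Polynomial.C (∑ k : Fin (d - (j : ℕ) + 1), lam ⟨j, k⟩ ^ (d - (j : ℕ)) * z ^ (k : ℕ)) *
        Polynomial.X ^ (j : ℕ)).degree < ((d : ℕ) : WithBot ℕ) := by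
  apply lt_of_le_of_lt (Polynomial.degree_sum_le _ _)
  rw [Finset.sup_lt_iff (by exact_mod_cast WithBot.bot_lt_coe d)]
  intro j _
  apply lt_of_le_of_lt (Polynomial.degree_C_mul_X_pow_le _ _)
  exact_mod_cast lt_of_lt_of_le j.2 (by omega)

theorem Qzp_monic (d : ℕ) (hd : 2 ≤ d) (lam : Param d) (z : ℂ) : (Qzp d lam z).Monic := by
  apply (Polynomial.monic_X_pow d).add_of_left
  rw [Polynomial.degree_X_pow]
  exact Qzp_tail_degree_lt d hd lam z

theorem Qzp_degree (d : ℕ) (hd : 2 ≤ d) (lam : Param d) (z : ℂ) :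
    (Qzp d lam z).degree = d := by
  rw [Qzp, Polynomial.degree_add_eq_left_of_degree_lt, Polynomial.degree_X_pow]
  rw [Polynomial.degree_X_pow]
  exact Qzp_tail_degree_lt d hd lam z

theorem Qzp_natDegree (d : ℕ) (hd : 2 ≤ d) (lam : Param d) (z : ℂ) :
    (Qzp d lam z).natDegree = d :=
  Polynomial.natDegree_eq_of_degree_eq_some (Qzp_degree d hd lam z)

theorem toFinset_card_lt {m : Multiset ℂ} {a : ℂ} (h2 : 2 ≤ m.count a) :
    m.toFinset.card < Multiset.card m := by
  have ha : a ∈ m := Multiset.count_pos.mp (by omega)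
  have ha' : a ∈ m.erase a := by
    rw [← Multiset.count_pos, Multiset.count_erase_self]; omega
  have heq : m.toFinset = (m.erase a).toFinset := by
    conv_lhs => rw [← Multiset.cons_erase ha]
    rw [Multiset.toFinset_cons]
    exact Finset.insert_eq_self.mpr (Multiset.mem_toFinset.mpr ha')
  have hpos : 0 < Multiset.card m := Multiset.card_pos_iff_exists_mem.mpr ⟨a, ha⟩
  rw [heq]
  calc (m.erase a).toFinset.card ≤ Multiset.card (m.erase a) := Multiset.toFinset_card_le _
  _ < Multiset.card m := by
      rw [Multiset.card_erase_of_mem ha]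
      exact Nat.pred_lt (by omega)

theorem roots_card_eq (P : Polynomial ℂ) : Multiset.card P.roots = P.natDegree :=
  Polynomial.splits_iff_card_roots.mp (IsAlgClosed.splits P)

theorem Qzp_sub_C_monic (d : ℕ) (hd : 2 ≤ d) (lam : Param d) (z c : ℂ) :
    ((Qzp d lam z) - Polynomial.C c).Monic := by
  rw [sub_eq_add_neg]
  apply (Qzp_monic d hd lam z).add_of_left
  rw [Qzp_degree d hd lam z, Polynomial.degree_neg]
  apply lt_of_le_of_lt Polynomial.degree_C_le
  exact_mod_cast (by omega : 0 < d)

theorem Qzp_sub_C_natDegree (d : ℕ) (hd : 2 ≤ d) (lam : Param d) (z c : ℂ) :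
    ((Qzp d lam z) - Polynomial.C c).natDegree = d := by
  apply Polynomial.natDegree_eq_of_degree_eq_some
  rw [Polynomial.degree_sub_C, Qzp_degree d hd lam z]
  rw [Qzp_degree d hd lam z]
  exact_mod_cast WithBot.coe_lt_coe.mpr (by omega : 0 < d)

theorem no_crit_val (d : ℕ) (hd : 2 ≤ d) (R : ℝ) (lam : Param d)
    (hcount : ∀ p ∈ Mset R, (fmap d lam ⁻¹' {p}).ncard = d ^ 2)
    {x : ℂ} (hx : ‖qpoly d lam 1 x‖ < R) :
    (Qzp d lam 1).derivative.eval x ≠ 0 := by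
  intro hder
  classical
  set c : ℂ := qpoly d lam 1 x with hcdef
  have hmem : ((1:ℂ), c) ∈ Mset R := ⟨by simp, hx⟩
  have hc2 := hcount ((1:ℂ), c) hmem
  set s : Finset ℂ := (Polynomial.X ^ d - Polynomial.C (1:ℂ)).roots.toFinset with hsdef
  have hXdne : (Polynomial.X ^ d - Polynomial.C (1:ℂ)) ≠ 0 :=
    Polynomial.X_pow_sub_C_ne_zero (by omega) 1
  have hsmem : ∀ z : ℂ, z ∈ s ↔ z ^ d = 1 := by
    intro z
    rw [hsdef, Multiset.mem_toFinset, Polynomial.mem_roots hXdne]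
    simp [Polynomial.IsRoot, sub_eq_zero]
  have hscard : s.card ≤ d := by
    calc s.card ≤ Multiset.card (Polynomial.X ^ d - Polynomial.C (1:ℂ)).roots :=
          Multiset.toFinset_card_le _
    _ ≤ (Polynomial.X ^ d - Polynomial.C (1:ℂ)).natDegree := Polynomial.card_roots' _
    _ = d := by rw [Polynomial.natDegree_X_pow_sub_C]
  set T : ℂ → Finset ℂ := fun z => ((Qzp d lam z) - Polynomial.C c).roots.toFinset with hTdef
  have hPne : ∀ z : ℂ, (Qzp d lam z) - Polynomial.C c ≠ 0 :=
    fun z => (Qzp_sub_C_monic d hd lam z c).ne_zero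
  have hTmem : ∀ z w : ℂ, w ∈ T z ↔ qpoly d lam z w = c := by
    intro z w
    rw [hTdef]
    simp only
    rw [Multiset.mem_toFinset, Polynomial.mem_roots (hPne z)]
    simp [Polynomial.IsRoot, Polynomial.eval_sub, eval_Qzp, sub_eq_zero]
  have hTcard : ∀ z : ℂ, (T z).card ≤ d := by
    intro z
    calc (T z).card ≤ Multiset.card ((Qzp d lam z) - Polynomial.C c).roots :=
          Multiset.toFinset_card_le _
    _ ≤ ((Qzp d lam z) - Polynomial.C c).natDegree := Polynomial.card_roots' _
    _ = d := Qzp_sub_C_natDegree d hd lam z c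
  have hT1lt : (T 1).card < d := by
    have hroot : ((Qzp d lam 1) - Polynomial.C c).IsRoot x := by
      simp [Polynomial.IsRoot, Polynomial.eval_sub, eval_Qzp, hcdef]
    have hroot' : (Polynomial.derivative ((Qzp d lam 1) - Polynomial.C c)).IsRoot x := by
      rw [Polynomial.derivative_sub, Polynomial.derivative_C, sub_zero]
      exact hder
    have h2 : 1 < ((Qzp d lam 1) - Polynomial.C c).rootMultiplicity x :=
      (Polynomial.one_lt_rootMultiplicity_iff_isRoot (hPne 1)).mpr ⟨hroot, hroot'⟩
    have hcnt : 2 ≤ ((Qzp d lam 1) - Polynomial.C c).roots.count x := by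
      rw [Polynomial.count_roots]; omega
    calc (T 1).card < Multiset.card ((Qzp d lam 1) - Polynomial.C c).roots :=
          toFinset_card_lt hcnt
    _ = d := by rw [roots_card_eq, Qzp_sub_C_natDegree d hd lam 1 c]
  have hfib : fmap d lam ⁻¹' {((1:ℂ), c)} = ↑(s.biUnion (fun z => {z} ×ˢ T z)) := by
    ext ⟨z, w⟩
    simp only [Set.mem_preimage, Set.mem_singleton_iff, fmap, Prod.mk.injEq,
      Finset.coe_biUnion, Set.mem_iUnion, Finset.mem_coe, Finset.mem_product,
      Finset.mem_singleton]
    constructor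
    · rintro ⟨h1, h2⟩
      exact ⟨z, (hsmem z).mpr h1, rfl, (hTmem z w).mpr h2⟩
    · rintro ⟨a, ha, rfl, hw⟩
      exact ⟨(hsmem _).mp ha, (hTmem _ w).mp hw⟩
  rw [hfib, Set.ncard_coe_finset] at hc2
  have hle : (s.biUnion (fun z => {z} ×ˢ T z)).card ≤ ∑ z ∈ s, ({z} ×ˢ T z).card :=
    Finset.card_biUnion_le
  have hsum : ∑ z ∈ s, ({z} ×ˢ T z).card = ∑ z ∈ s, (T z).card := by
    apply Finset.sum_congr rfl
    intro z _
    rw [Finset.card_product, Finset.card_singleton, one_mul]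
  have h1s : (1:ℂ) ∈ s := (hsmem 1).mpr (one_pow d)
  have hstrict : ∑ z ∈ s, (T z).card < s.card * d := by
    have := Finset.sum_lt_sum (fun i (_ : i ∈ s) => hTcard i) ⟨1, h1s, hT1lt⟩
    simpa [Finset.sum_const, smul_eq_mul] using this
  have hfinal : (s.biUnion (fun z => {z} ×ˢ T z)).card < d ^ 2 := by
    calc (s.biUnion (fun z => {z} ×ˢ T z)).card ≤ ∑ z ∈ s, ({z} ×ˢ T z).card := hle
    _ = ∑ z ∈ s, (T z).card := hsum
    _ < s.card * d := hstrict
    _ ≤ d * d := Nat.mul_le_mul_right d hscard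
    _ = d ^ 2 := (sq d).symm
  omega

theorem fixed_mem_julia (d : ℕ) (lam : Param d) {w : ℂ} (hw : qpoly d lam 1 w = w) :
    ((1:ℂ), w) ∈ Julia d lam := by
  have hfix : ∀ n, Qit d lam 1 n w = w := by
    intro n
    induction n with
    | zero => rfl
    | succ n ih => simp [Qit, one_pow, ih, hw]
  constructor
  · simp
  · apply Bornology.isBounded_singleton (x := w) |>.subset
    rintro y ⟨n, rfl⟩
    simp [hfix n]

theorem Qzp_sub_X_ne_zero (d : ℕ) (hd : 2 ≤ d) (lam : Param d) :
    Qzp d lam 1 - Polynomial.X ≠ 0 := by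
  intro h0
  have hc : (Qzp d lam 1 - Polynomial.X).coeff d = 0 := by rw [h0]; simp
  rw [Polynomial.coeff_sub, Polynomial.coeff_X, if_neg (by omega : ¬ (1 = d))] at hc
  have hm := Qzp_monic d hd lam 1
  have hnd := Qzp_natDegree d hd lam 1
  rw [Polynomial.Monic, Polynomial.leadingCoeff, hnd] at hm
  rw [hm] at hc
  norm_num at hc

theorem no_parab (d : ℕ) (hd : 2 ≤ d) (R : ℝ) (hR : 0 < R) (lam : Param d)
    (hadm : Admissible d lam R) {x : ℂ} (hfx : qpoly d lam 1 x = x) :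
    (Qzp d lam 1).derivative.eval x ≠ 1 := by
  intro hder1
  obtain ⟨hnest, ⟨hcov, hcount⟩, hjulia⟩ := hadm
  have hFq : ∀ w, Polynomial.eval w (Qzp d lam 1) = qpoly d lam 1 w :=
    fun w => eval_Qzp d lam 1 w
  -- x is in the Julia set, hence |x| < R
  have hJ : ((1:ℂ), x) ∈ Julia d lam := fixed_mem_julia d lam hfx
  have hxR : ‖x‖ < R := by
    rw [← hjulia] at hJ
    have h0 := Set.mem_iInter.mp hJ 0
    have : ((1:ℂ), x) ∈ Mset R := by simpa [MsetN, Mset] using h0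
    exact this.2
  -- the closure of the fiber preimage U1 is inside the disk
  set U1 : Set ℂ := {y : ℂ | ‖qpoly d lam 1 y‖ < R} with hU1def
  have hU1cl : closure U1 ⊆ Metric.ball (0:ℂ) R := by
    intro y hy
    have h1 : ((1:ℂ), y) ∈ closure (MsetN d lam R 1) := by
      have hsub : (fun w : ℂ => ((1:ℂ), w)) '' U1 ⊆ MsetN d lam R 1 := by
        rintro _ ⟨w, hw, rfl⟩
        show (fmap d lam)^[1] (1, w) ∈ Mset R
        rw [Function.iterate_one]
        exact ⟨by simp [fmap], by exact hw⟩
      have hcont : Continuous (fun w : ℂ => ((1:ℂ), w)) :=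
        continuous_const.prodMk continuous_id
      have hmem : ((1:ℂ), y) ∈ closure ((fun w : ℂ => ((1:ℂ), w)) '' U1) :=
        image_closure_subset_closure_image hcont ⟨y, hy, rfl⟩
      exact closure_mono hsub hmem
    have h2 := (hnest 0).2 h1
    have h3 : ((1:ℂ), y) ∈ Mset R := by simpa [MsetN] using h2
    rw [Metric.mem_ball, dist_zero_right]
    exact h3.2
  have hxU1 : x ∈ U1 := by
    show ‖qpoly d lam 1 x‖ < R
    rw [hfx]; exact hxR
  have hU1bd : Bornology.IsBounded U1 :=
    Metric.isBounded_ball.subset (fun y hy => hU1cl (subset_closure hy))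
  have hcomp : IsCompact (closure U1) :=
    Metric.isCompact_of_isClosed_isBounded isClosed_closure hU1bd.closure
  obtain ⟨zs, hzsmem, hzsmax⟩ := hcomp.exists_isMaxOn ⟨x, subset_closure hxU1⟩
    continuous_norm.continuousOn
  have hR''R : ‖zs‖ < R := by
    have := hU1cl hzsmem
    rwa [Metric.mem_ball, dist_zero_right] at this
  set R' : ℝ := (max ‖zs‖ ‖x‖ + R) / 2 with hR'def
  have hxabs : ‖x‖ < R := by exact hxR
  have hmaxR : max ‖zs‖ ‖x‖ < R := max_lt hR''R hxabs
  have hxR' : ‖x‖ < R' := by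
    have := le_max_right ‖zs‖ ‖x‖
    rw [hR'def]; linarith
  have hR''R' : ‖zs‖ < R' := by
    have := le_max_left ‖zs‖ ‖x‖
    rw [hR'def]; linarith
  have hR'R : R' < R := by rw [hR'def]; linarith
  have hR'pos : 0 < R' := lt_of_le_of_lt (norm_nonneg x) hxR'
  -- no critical values with modulus ≤ R'
  have hne : ∀ y : ℂ, ‖Polynomial.eval y (Qzp d lam 1)‖ ≤ R' →
      Polynomial.eval y (Qzp d lam 1).derivative ≠ 0 := by
    intro y hy
    apply no_crit_val d hd R lam hcount
    rw [← hFq y]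
    linarith
  have hbd2 : Bornology.IsBounded {y : ℂ | ‖Polynomial.eval y (Qzp d lam 1)‖ ≤ R'} := by
    apply hU1bd.subset
    intro y hy
    show ‖qpoly d lam 1 y‖ < R
    rw [← hFq y]
    have : ‖Polynomial.eval y (Qzp d lam 1)‖ ≤ R' := hy
    linarith
  have hx₀ : ‖Polynomial.eval x (Qzp d lam 1)‖ < R' := by
    rw [hFq, hfx]; exact hxR'
  obtain ⟨g, hgdiff, hgsec, hgfix⟩ := exists_poly_section (Qzp d lam 1) hR'pos hne hbd2 hx₀
  have hevalx : Polynomial.eval x (Qzp d lam 1) = x := by rw [hFq, hfx]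
  rw [hevalx] at hgfix
  have hmaps : Set.MapsTo g (Metric.ball (0:ℂ) R') (Metric.ball (0:ℂ) R') := by
    intro cc hcc
    have h1 : Polynomial.eval (g cc) (Qzp d lam 1) = cc := hgsec cc hcc
    have h2 : g cc ∈ U1 := by
      show ‖qpoly d lam 1 (g cc)‖ < R
      rw [← hFq, h1]
      have : ‖cc‖ < R' := mem_ball_zero_iff.mp hcc
      linarith
    have h3 : ‖g cc‖ ≤ ‖zs‖ := hzsmax (subset_closure h2)
    rw [mem_ball_zero_iff]
    linarith
  have hinj : Set.InjOn g (Metric.ball (0:ℂ) R') := by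
    intro a ha b hb hab
    have h1 := hgsec a ha
    have h2 := hgsec b hb
    rw [← h1, ← h2, hab]
  have hxball : x ∈ Metric.ball (0:ℂ) R' := mem_ball_zero_iff.mpr hxR'
  have hFd : HasDerivAt (fun w => Polynomial.eval w (Qzp d lam 1)) 1 x := by
    have := ((Qzp d lam 1).hasStrictDerivAt x).hasDerivAt
    rwa [hder1] at this
  have hgd : DifferentiableAt ℂ g x :=
    hgdiff.differentiableAt (Metric.isOpen_ball.mem_nhds hxball)
  have hga : HasDerivAt g (deriv g x) x := hgd.hasDerivAt
  have hcompd : HasDerivAt ((fun w => Polynomial.eval w (Qzp d lam 1)) ∘ g)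
      (1 * deriv g x) x := by
    apply HasDerivAt.comp
    · rw [hgfix]; exact hFd
    · exact hga
  have hidd : ((fun w => Polynomial.eval w (Qzp d lam 1)) ∘ g) =ᶠ[𝓝 x] id := by
    filter_upwards [Metric.isOpen_ball.eventually_mem hxball] with cc hcc
    exact hgsec cc hcc
  have h1a : 1 * deriv g x = 1 :=
    (hcompd.congr_of_eventuallyEq hidd.symm).unique (hasDerivAt_id x)
  have hga1 : HasDerivAt g 1 x := by
    rw [one_mul] at h1a
    rwa [h1a] at hga
  have hnid : ¬ ∀ᶠ w in 𝓝 x, g w = w := by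
    intro hev
    have hev2 : ∀ᶠ w in 𝓝 x, w ∈ {w : ℂ | (Qzp d lam 1 - Polynomial.X).IsRoot w} := by
      filter_upwards [hev, Metric.isOpen_ball.eventually_mem hxball] with w hw hwb
      have h1 := hgsec w hwb
      rw [hw] at h1
      show Polynomial.eval w (Qzp d lam 1 - Polynomial.X) = 0
      rw [Polynomial.eval_sub, Polynomial.eval_X, h1, sub_self]
    have hinf : {w : ℂ | (Qzp d lam 1 - Polynomial.X).IsRoot w}.Infinite :=
      infinite_of_mem_nhds x hev2
    exact Qzp_sub_X_ne_zero d hd lam (Polynomial.eq_zero_of_infinite_isRoot _ hinf)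
  exact key_no_parabolic hxball hgdiff hmaps hinj hgfix hga1 hnid

theorem fixed_count (d : ℕ) (hd : 2 ≤ d) (R : ℝ) (hR : 0 < R) (lam : Param d)
    (hadm : Admissible d lam R) : {w : ℂ | qpoly d lam 1 w = w}.ncard = d := by
  classical
  have hpne : Qzp d lam 1 - Polynomial.X ≠ 0 := Qzp_sub_X_ne_zero d hd lam
  have hdeg : (Qzp d lam 1 - Polynomial.X).natDegree = d := by
    apply Polynomial.natDegree_eq_of_degree_eq_some
    have htail : (Qzp d lam 1 - Polynomial.X).degree = (Polynomial.X ^ d +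
        ((∑ j : Fin (d - 1), Polynomial.C (∑ k : Fin (d - (j : ℕ) + 1),
        lam ⟨j, k⟩ ^ (d - (j : ℕ)) * (1:ℂ) ^ (k : ℕ)) * Polynomial.X ^ (j : ℕ))
        - Polynomial.X)).degree := by
      rw [Qzp, add_sub_assoc]
    rw [htail, Polynomial.degree_add_eq_left_of_degree_lt, Polynomial.degree_X_pow]
    rw [Polynomial.degree_X_pow]
    apply lt_of_le_of_lt (Polynomial.degree_sub_le _ _)
    rw [max_lt_iff]
    constructor
    · exact Qzp_tail_degree_lt d hd lam 1
    · rw [Polynomial.degree_X]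
      exact_mod_cast (by omega : 1 < d)
  have hsetroots : {w : ℂ | qpoly d lam 1 w = w} =
      ↑(Qzp d lam 1 - Polynomial.X).roots.toFinset := by
    ext w
    rw [Set.mem_setOf_eq, Finset.mem_coe, Multiset.mem_toFinset,
      Polynomial.mem_roots hpne]
    rw [Polynomial.IsRoot, Polynomial.eval_sub, Polynomial.eval_X, eval_Qzp, sub_eq_zero]
  have hnodup : (Qzp d lam 1 - Polynomial.X).roots.Nodup := by
    rw [Multiset.nodup_iff_count_le_one]
    intro a
    by_contra hcon
    push_neg at hcon
    rw [Polynomial.count_roots] at hcon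
    have h2 := (Polynomial.one_lt_rootMultiplicity_iff_isRoot hpne).mp hcon
    have hroot : qpoly d lam 1 a = a := by
      have := h2.1
      rw [Polynomial.IsRoot, Polynomial.eval_sub, Polynomial.eval_X, eval_Qzp,
        sub_eq_zero] at this
      exact this
    have hder : Polynomial.eval a (Qzp d lam 1).derivative = 1 := by
      have h3 := h2.2
      rw [Polynomial.derivative_sub, Polynomial.derivative_X, Polynomial.IsRoot,
        Polynomial.eval_sub, Polynomial.eval_one, sub_eq_zero] at h3
      exact h3
    exact no_parab d hd R hR lam hadm hroot hder
  rw [hsetroots, Set.ncard_coe_finset,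
    Multiset.toFinset_card_eq_card_iff_nodup.mpr hnodup, roots_card_eq, hdeg]

/-- an admissible map has exactly `d` fixed points in the fiber over
`z = 1`, all lying in the Julia set. -/
theorem fixed_points_in_fiber (d : ℕ) (hd : 2 ≤ d) (R : ℝ) (hR : 0 < R)
    (lam : Param d) (hadm : Admissible d lam R) :
    {w : ℂ | qpoly d lam 1 w = w}.ncard = d ∧
    ∀ w : ℂ, qpoly d lam 1 w = w → ((1 : ℂ), w) ∈ Julia d lam := by
  exact ⟨fixed_count d hd R hR lam hadm, fun w hw => fixed_mem_julia d lam hw⟩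
end
end
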